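/- arXiv:1607.07658 — 5 statements merged into one kernel-verified Lean document; each statement's English description precedes it below -/
import Mathlib

section
/- Let w_0 = (x_1,...,x_k) be a non-decreasing sequence of integers with l ≤ x_l ≤ n-1 for every l ∈ {1,...,k}. Then the number of permutations of {1,...,n} that are lucky for w_0 and have no w_0-threshold equals k · (n-k-1)! · Π_{j=1}^{k} (x_j - j + 1). -/
open Finset

namespace Secretary

/-- Binomial coefficient on integers: zero when `b < 0` or `b > a`. -/
noncomputable def Cb (a b : ℤ) : ℝ :=
  if 0 ≤ b ∧ b ≤ a then (Nat.choose a.toNat b.toNat : ℝ) else 0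

/-- The value `π(i)` of a permutation of `{1,...,n}` in 1-based indexing. -/
def pv (n : ℕ) (π : Equiv.Perm (Fin n)) (i : ℕ) : ℕ :=
  if h : i - 1 < n then ((π ⟨i - 1, h⟩ : Fin n) : ℕ) + 1 else 0

/-- The relative rank `ρ_π(i)`: the number of `j ∈ {1,...,i}` with `π(j) ≤ π(i)`. -/
def rho (n : ℕ) (π : Equiv.Perm (Fin n)) (i : ℕ) : ℕ :=
  ((Finset.Icc 1 i).filter fun j => pv n π j ≤ pv n π i).card

/-- Extension of a sequence `s` with `s (k+1) = n - 1`. -/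
def sExt (n k : ℕ) (s : ℕ → ℕ) (l : ℕ) : ℕ := if l = k + 1 then n - 1 else s l

/-- `i` is a `(π, l, w)`-element. -/
def IsElem (n k : ℕ) (s : ℕ → ℕ) (π : Equiv.Perm (Fin n)) (l i : ℕ) : Prop :=
  sExt n k s l < i ∧ i ≤ sExt n k s (l + 1) ∧ rho n π i ≤ l

/-- `l` is a `w`-threshold of `π`. -/
def IsThreshold (n k : ℕ) (s : ℕ → ℕ) (π : Equiv.Perm (Fin n)) (l : ℕ) : Prop :=
  1 ≤ l ∧ l ≤ k ∧ ∃ i, IsElem n k s π l i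

open Classical in
/-- `π` is a lucky permutation for the sequence `w = s`. -/
def Lucky (n k : ℕ) (s : ℕ → ℕ) (π : Equiv.Perm (Fin n)) : Prop :=
  if ∃ l, IsThreshold n k s π l then
    pv n π (sInf {i | IsElem n k s π (sInf {l | IsThreshold n k s π l}) i}) ≤ k
  else pv n π n ≤ k

/-- The maps `r_l` (first argument an integer `l ≤ k`). -/
noncomputable def rr (n k : ℕ) (l : ℤ) (x : ℕ) : ℝ :=
  if l < 0 then 0
  else if l = 0 then
    1 / (x : ℝ) - (k : ℝ) / n - Cb ((n : ℤ) - x - 1) k / ((x : ℝ) * Cb n k)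
      - (1 / Cb n k) * ∑ j ∈ Finset.Icc 1 x, Cb ((n : ℤ) - j - 1) ((k : ℤ) - 1) / (j : ℝ)
  else
    ((Nat.factorial (x - l.toNat - 1) : ℝ) / (Nat.factorial x : ℝ)) *
      (1 - (1 / ((l : ℝ) * Cb n x)) *
        ∑ j ∈ Finset.range (l.toNat + 1),
          ((l : ℝ) - j) * Cb k j * Cb ((n : ℤ) - k) ((x : ℤ) - j))

/-- The constant `δ_{k,n}`. -/
noncomputable def delta (n k : ℕ) : ℝ :=
  if k = 1 then -(1 / (n : ℝ)) * ∑ j ∈ Finset.Icc 1 (n - 1), (1 : ℝ) / j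
  else (Nat.factorial (n - k) : ℝ) / (Nat.factorial n : ℝ)

/-- The maps `d_l` for `0 ≤ l ≤ k`. -/
noncomputable def d (n k : ℕ) (l x : ℕ) : ℝ :=
  if l = 0 then
    -1 + (k : ℝ) * x / n + Cb ((n : ℤ) - x - 1) k / Cb n k
      + ((x : ℝ) / Cb n k) * ∑ j ∈ Finset.Icc 1 x, Cb ((n : ℤ) - j - 1) ((k : ℤ) - 1) / (j : ℝ)
  else if l = 1 then
    -((k : ℝ) / n) - (1 / Cb n k) * ∑ j ∈ Finset.Icc 1 x, Cb ((n : ℤ) - j - 1) ((k : ℤ) - 1) / (j : ℝ)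
  else
    ((k : ℝ) * (Nat.factorial x : ℝ) * (Nat.factorial (n - l - x) : ℝ) /
        ((l : ℝ) * ((l : ℝ) - 1) * (Nat.factorial n : ℝ))) *
      ∑ j ∈ Finset.range (l - 1), Cb ((k : ℤ) - 1) j * Cb ((n : ℤ) - k) ((x : ℤ) + l - j - 1)

/-- The maps `c_l(x) = d_l(x - l)`. -/
noncomputable def c (n k l x : ℕ) : ℝ := d n k l (x - l)

/-- The constant `ξ_{k,n}`. -/
noncomputable def xi (n k : ℕ) : ℝ :=
  (k : ℝ) * (Nat.factorial (n - k - 1) : ℝ) / (Nat.factorial n : ℝ)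

/-- `w` (given as a 1-indexed function) is a word in `X^{(k-l)}`, i.e. its `j`-th letter
belongs to `X_{l+j} = {l+j, ..., n-1}` for `1 ≤ j ≤ k - l`. -/
def memX (n k l : ℕ) (w : ℕ → ℕ) : Prop :=
  ∀ j ∈ Finset.Icc 1 (k - l), l + j ≤ w j ∧ w j ≤ n - 1

/-- The left-shift operator removing the first `l` letters of a word. -/
def shift (l : ℕ) (w : ℕ → ℕ) : ℕ → ℕ := fun j => w (l + j)

/-- The maps `R_{l,j}`. -/
noncomputable def Rmap (n k l : ℕ) (w : ℕ → ℕ) (j : ℕ) : ℝ :=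
  if 1 ≤ j ∧ j ≤ k - l then
    rr n k ((l : ℤ) + j - 1) (w j)
      - rr n k ((l : ℤ) + j - 1) (if j = k - l then n - 1 else w (j + 1))
  else 0

/-- The maps `Γ_{l,j,j'}`. -/
noncomputable def Gam (n k l j j' : ℕ) (w : ℕ → ℕ) : ℝ :=
  if 1 ≤ j ∧ j ≤ j' ∧ j' ≤ k - l then
    ∏ t ∈ Finset.Icc j j', ((w t : ℝ) - l - t + 1)
  else 1

/-- The maps `T_l`. -/
noncomputable def Tmap (n k l : ℕ) (w : ℕ → ℕ) : ℝ :=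
  (∑ j ∈ Finset.Icc 1 (k - l), Rmap n k l w j * Gam n k l 1 j w)
    + xi n k * Gam n k l 1 (k - l) w

/-- The maps `D_l(w) = r_{l-1}(x_1) - T_l(w)`, with `x_1 := n-1` when `l = k`. -/
noncomputable def Dmap (n k l : ℕ) (w : ℕ → ℕ) : ℝ :=
  rr n k ((l : ℤ) - 1) (if l = k then n - 1 else w 1) - Tmap n k l w

/-- The maps `F_{l,w}(x) = -c_{l-1}(x) - x·D_l(w)`. -/
noncomputable def Fmap (n k l : ℕ) (w : ℕ → ℕ) (x : ℕ) : ℝ :=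
  -(c n k (l - 1) x) - (x : ℝ) * Dmap n k l w

/-- The maps `a_l`. -/
noncomputable def amap (n k l x : ℕ) : ℝ :=
  (1 / Cb n x) * ∑ j ∈ Finset.range (l + 1), Cb k j * Cb ((n : ℤ) - k) ((x : ℤ) - j)

/-- The maps `b_l`. -/
noncomputable def bmap (n k l x : ℕ) : ℝ :=
  (1 / ((l : ℝ) * Cb n x)) *
    ∑ j ∈ Finset.range (l + 1), (j : ℝ) * Cb k j * Cb ((n : ℤ) - k) ((x : ℤ) - j)

/-- `π ∈ S(l0, i0)`: `π` is lucky for `s`, `l0` is the smallest `s`-threshold of `π`,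
and `i0` is the smallest `(π, l0, s)`-element. -/
def SMem (n k : ℕ) (s : ℕ → ℕ) (l0 i0 : ℕ) (π : Equiv.Perm (Fin n)) : Prop :=
  Lucky n k s π ∧ IsLeast {l | IsThreshold n k s π l} l0 ∧
    IsLeast {i | IsElem n k s π l0 i} i0

/-- `π ∈ S(Y, Y', l0, i0)`. -/
def SYYMem (n k : ℕ) (s : ℕ → ℕ) (Y Y' : Finset ℕ) (l0 i0 : ℕ) (π : Equiv.Perm (Fin n)) :
    Prop :=
  SMem n k s l0 i0 π ∧ ((Finset.Icc 1 i0).image (pv n π)) ∩ Finset.Icc 1 k = Y ∧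
    ((Finset.Icc 1 i0).image (pv n π)) ∩ Finset.Icc (k + 1) n = Y'


open scoped Nat

/-!
Deleting the last position of a permutation of `{1, …, m + 1}` and relabelling the remaining
values order-preservingly keeps the relative ranks at positions `≤ m`; together with the last
value this is a bijection onto `{1, …, m + 1} × Sym(m)`. Hence the relative ranks vary
independently, `ρ(i)` over `{1, …, i}`, and constraints `ρ(i) ∈ A_i` are met by `∏ |A_i|`
permutations. Having no threshold means `ρ(i) > l` whenever `s l < i ≤ s (l + 1)`, and a lucky
permutation without threshold has `ρ(n) = π(n) ≤ k`. So the count is `k · ∏_{i < n} (i - l(i))`,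
and over the blocks `(s l, s (l + 1)]` this product telescopes to `(n - k - 1)! · ∏ (s j - j + 1)`.
-/

lemma pv_val_add_one {n : ℕ} (π : Equiv.Perm (Fin n)) (b : Fin n) :
    pv n π (b + 1) = π b + 1 := by
  simp [pv]

lemma exists_val_add_one_eq {n i : ℕ} (hi : i ∈ Icc 1 n) : ∃ b : Fin n, (b : ℕ) + 1 = i := by
  rw [mem_Icc] at hi
  exact ⟨⟨i - 1, by omega⟩, by simp only; omega⟩

lemma card_fin_filter_val_add_one (n : ℕ) (P : ℕ → Prop) [DecidablePred P] :
    #{b : Fin n | P (b + 1)} = #{i ∈ Icc 1 n | P i} := by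
  refine card_bij (fun b _ => (b : ℕ) + 1) (fun b hb => ?_) (fun a _ b _ h => ?_) fun i hi => ?_
  · simp only [mem_filter, mem_univ, true_and, mem_Icc] at hb ⊢
    exact ⟨⟨by omega, b.isLt⟩, hb⟩
  · exact Fin.ext (by simpa using h)
  · rw [mem_filter] at hi
    obtain ⟨b, rfl⟩ := exists_val_add_one_eq hi.1
    exact ⟨b, by simpa using hi.2, rfl⟩

lemma rho_pos {n i : ℕ} (π : Equiv.Perm (Fin n)) (hi : 1 ≤ i) : 1 ≤ rho n π i :=
  card_pos.mpr ⟨i, by simp [hi]⟩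

lemma rho_last (m : ℕ) (π : Equiv.Perm (Fin (m + 1))) :
    rho (m + 1) π (m + 1) = π (Fin.last m) + 1 := by
  have hlast : pv (m + 1) π (m + 1) = π (Fin.last m) + 1 := pv_val_add_one π (Fin.last m)
  rw [rho, hlast, ← card_fin_filter_val_add_one]
  simp only [pv_val_add_one, add_le_add_iff_right, Fin.val_fin_le]
  rw [← Fin.card_Iic, ← card_map π.toEmbedding]
  congr 1
  ext c
  simp

def removeLast {m : ℕ} (π : Equiv.Perm (Fin (m + 1))) : Equiv.Perm (Fin m) :=
  (finSuccAboveEquiv (Fin.last m)).trans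
    ((π.subtypeEquiv (p := (· ≠ Fin.last m)) (q := (· ≠ π (Fin.last m)))
        fun _ => π.injective.ne_iff.symm).trans
      (finSuccAboveEquiv (π (Fin.last m))).symm)

lemma succAbove_removeLast {m : ℕ} (π : Equiv.Perm (Fin (m + 1))) (j : Fin m) :
    (π (Fin.last m)).succAbove (removeLast π j) = π j.castSucc := by
  have h : (finSuccAboveEquiv (π (Fin.last m)) (removeLast π j) : Fin (m + 1)) =
      π j.castSucc := by
    simp [removeLast, finSuccAboveEquiv_apply, Fin.succAbove_last]
  rwa [finSuccAboveEquiv_apply] at h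

lemma removeLast_le_removeLast_iff {m : ℕ} (π : Equiv.Perm (Fin (m + 1))) (a b : Fin m) :
    removeLast π a ≤ removeLast π b ↔ π a.castSucc ≤ π b.castSucc := by
  rw [← succAbove_removeLast, ← succAbove_removeLast]
  exact (Fin.strictMono_succAbove _).le_iff_le.symm

lemma rho_removeLast {m i : ℕ} (π : Equiv.Perm (Fin (m + 1))) (hi : i ∈ Icc 1 m) :
    rho m (removeLast π) i = rho (m + 1) π i := by
  obtain ⟨b, rfl⟩ := exists_val_add_one_eq hi
  have := b.isLt
  refine congrArg card (filter_congr fun j hj => ?_)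
  obtain ⟨a, rfl⟩ := exists_val_add_one_eq (n := m) (i := j)
    (by simp only [mem_Icc] at hj ⊢; omega)
  have hpv (c : Fin m) : pv (m + 1) π (c + 1) = π c.castSucc + 1 := pv_val_add_one π c.castSucc
  simp only [pv_val_add_one, hpv, add_le_add_iff_right, Fin.val_fin_le,
    removeLast_le_removeLast_iff]

lemma last_removeLast_bijective (m : ℕ) :
    Function.Bijective fun π : Equiv.Perm (Fin (m + 1)) => (π (Fin.last m), removeLast π) := by
  refine (Fintype.bijective_iff_injective_and_card _).2 ⟨fun π σ h => ?_, ?_⟩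
  · simp only [Prod.mk.injEq] at h
    ext x
    induction x using Fin.lastCases with
    | last => rw [h.1]
    | cast j => rw [← succAbove_removeLast, ← succAbove_removeLast, h.1, h.2]
  · simp [Fintype.card_perm, Nat.factorial_succ]

lemma card_perm_rho_last_and_forall_rho (m : ℕ) (P : ℕ → Prop) (Q : ℕ → ℕ → Prop)
    [DecidablePred P] :
    Nat.card {π : Equiv.Perm (Fin (m + 1)) //
        P (rho (m + 1) π (m + 1)) ∧ ∀ i ∈ Icc 1 m, Q i (rho (m + 1) π i)} =
      #{r ∈ Icc 1 (m + 1) | P r} *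
        Nat.card {σ : Equiv.Perm (Fin m) // ∀ i ∈ Icc 1 m, Q i (rho m σ i)} := by
  have e : {π : Equiv.Perm (Fin (m + 1)) //
        P (rho (m + 1) π (m + 1)) ∧ ∀ i ∈ Icc 1 m, Q i (rho (m + 1) π i)} ≃
      {v : Fin (m + 1) // P (v + 1)} ×
        {σ : Equiv.Perm (Fin m) // ∀ i ∈ Icc 1 m, Q i (rho m σ i)} :=
    ((Equiv.ofBijective _ (last_removeLast_bijective m)).subtypeEquiv fun π => by
      simp only [Equiv.ofBijective_apply, rho_last]
      exact and_congr_right' (forall₂_congr fun i hi => by rw [rho_removeLast π hi])).trans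
    (Equiv.subtypeProdEquivProd (p := fun v : Fin (m + 1) => P (v + 1))
      (q := fun σ : Equiv.Perm (Fin m) => ∀ i ∈ Icc 1 m, Q i (rho m σ i)))
  rw [Nat.card_congr e, Nat.card_prod, Nat.card_eq_fintype_card (α := Subtype _),
    Fintype.card_subtype, card_fin_filter_val_add_one]

theorem card_perm_forall_rho (m : ℕ) (Q : ℕ → ℕ → Prop) [∀ i, DecidablePred (Q i)] :
    Nat.card {π : Equiv.Perm (Fin m) // ∀ i ∈ Icc 1 m, Q i (rho m π i)} =
      ∏ i ∈ Icc 1 m, #{r ∈ Icc 1 i | Q i r} := by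
  induction m with
  | zero => simp [Nat.card_eq_fintype_card]
  | succ m ih =>
    rw [← insert_Icc_right_eq_Icc_add_one (by omega), prod_insert (by simp)]
    simp only [forall_mem_insert]
    rw [card_perm_rho_last_and_forall_rho, ih]

/-- For monotone `s`, the index `l` with `s l < i ≤ s (l + 1)` (with `s 0 = 0`, `s (k + 1) = ∞`). -/
def blockIndex (k : ℕ) (s : ℕ → ℕ) (i : ℕ) : ℕ := #{l ∈ Icc 1 k | s l < i}

lemma blockIndex_le (k : ℕ) (s : ℕ → ℕ) (i : ℕ) : blockIndex k s i ≤ k :=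
  (card_filter_le _ _).trans (by simp)

lemma blockIndex_add_one (k : ℕ) (s : ℕ → ℕ) (i : ℕ) :
    blockIndex (k + 1) s i = blockIndex k s i + if s (k + 1) < i then 1 else 0 := by
  simp only [blockIndex, card_filter]
  exact sum_Icc_succ_top (by omega) _

lemma le_blockIndex_iff {k l i : ℕ} {s : ℕ → ℕ} (hs : MonotoneOn s (Set.Icc 1 k))
    (hl : l ∈ Icc 1 k) : l ≤ blockIndex k s i ↔ s l < i := by
  rw [mem_Icc] at hl
  constructor
  · intro h
    by_contra! hsl
    have hsub : {l' ∈ Icc 1 k | s l' < i} ⊆ Ico 1 l := fun l' hl' => by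
      simp only [mem_filter, mem_Icc, mem_Ico] at hl' ⊢
      refine ⟨hl'.1.1, lt_of_not_ge fun hll' => ?_⟩
      exact (hsl.trans (hs ⟨hl.1, hl.2⟩ ⟨hl'.1.1, hl'.1.2⟩ hll')).not_gt hl'.2
    have := card_le_card hsub
    simp only [Nat.card_Ico] at this
    exact absurd h (by unfold blockIndex; omega)
  · intro h
    have hsub : Icc 1 l ⊆ {l' ∈ Icc 1 k | s l' < i} := fun l' hl' => by
      simp only [mem_filter, mem_Icc] at hl' ⊢
      exact ⟨⟨hl'.1, hl'.2.trans hl.2⟩,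
        (hs ⟨hl'.1, hl'.2.trans hl.2⟩ ⟨hl.1, hl.2⟩ hl'.2).trans_lt h⟩
    simpa [blockIndex] using card_le_card hsub

lemma factorial_mul_prod_Ioc_sub {c a N : ℕ} (hca : c ≤ a) (haN : a ≤ N) :
    (a - c)! * ∏ i ∈ Ioc a N, (i - c) = (N - c)! := by
  induction N, haN using Nat.le_induction with
  | base => simp
  | succ N hN ih =>
    rw [prod_Ioc_succ_top hN, ← mul_assoc, ih, Nat.sub_add_comm (hca.trans hN),
      Nat.factorial_succ, mul_comm]

theorem prod_sub_blockIndex {s : ℕ → ℕ} {k N : ℕ} (hs : MonotoneOn s (Set.Icc 1 k))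
    (hsN : ∀ j ∈ Icc 1 k, j ≤ s j ∧ s j ≤ N) :
    ∏ i ∈ Icc 1 N, (i - blockIndex k s i) = (N - k)! * ∏ j ∈ Icc 1 k, (s j - j + 1) := by
  induction k generalizing N with
  | zero =>
    simp [blockIndex, ← Ico_add_one_right_eq_Icc, prod_Ico_id_eq_factorial]
  | succ k ih =>
    set a := s (k + 1)
    obtain ⟨hka, haN⟩ := hsN (k + 1) (by simp)
    have hsa : ∀ j ∈ Icc 1 k, j ≤ s j ∧ s j ≤ a := fun j hj => by
      rw [mem_Icc] at hj
      exact ⟨(hsN j (by simp only [mem_Icc]; omega)).1,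
        hs ⟨hj.1, by omega⟩ ⟨by omega, le_rfl⟩ (by omega)⟩
    have hlow : ∀ i ∈ Icc 1 a, i - blockIndex (k + 1) s i = i - blockIndex k s i :=
      fun i hi => by rw [blockIndex_add_one, if_neg (by simp at hi; omega), add_zero]
    have hhigh : ∀ i ∈ Ioc a N, i - blockIndex (k + 1) s i = i - (k + 1) := fun i hi => by
      rw [mem_Ioc] at hi
      have hall : blockIndex k s i = k := by
        rw [blockIndex, filter_true_of_mem fun j hj => (hsa j hj).2.trans_lt hi.1]
        simp
      rw [blockIndex_add_one, hall, if_pos hi.1]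
    have hIoc (x : ℕ) : Icc 1 x = Ioc 0 x := by ext; simp only [mem_Icc, mem_Ioc]; omega
    rw [hIoc N, ← prod_Ioc_consecutive _ (Nat.zero_le a) haN, ← hIoc a, prod_congr rfl hlow,
      prod_congr rfl hhigh, ih (hs.mono (Set.Icc_subset_Icc_right (by omega))) hsa,
      prod_Icc_succ_top (by omega),
      ← factorial_mul_prod_Ioc_sub (by omega : k + 1 ≤ a) haN,
      (by omega : a - k = a - (k + 1) + 1), Nat.factorial_succ]
    ring

lemma sExt_succ_le {n k l : ℕ} {s : ℕ → ℕ} (hsn : ∀ j ∈ Icc 1 k, s j ≤ n - 1) (hl : l ≤ k) :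
    sExt n k s (l + 1) ≤ n - 1 := by
  unfold sExt
  split_ifs with h
  · exact le_rfl
  · exact hsn (l + 1) (by simp only [mem_Icc]; omega)

theorem not_exists_isThreshold_iff {n k : ℕ} {s : ℕ → ℕ} (hs : MonotoneOn s (Set.Icc 1 k))
    (hsn : ∀ l ∈ Icc 1 k, s l ≤ n - 1) (π : Equiv.Perm (Fin n)) :
    (¬∃ l, IsThreshold n k s π l) ↔ ∀ i ∈ Icc 1 (n - 1), blockIndex k s i < rho n π i := by
  constructor
  · intro hno i hi
    by_contra! hρ
    rw [mem_Icc] at hi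
    have hl1 : 1 ≤ blockIndex k s i := (rho_pos π hi.1).trans hρ
    have hlk := blockIndex_le k s i
    have hsl : s (blockIndex k s i) < i := (le_blockIndex_iff hs (mem_Icc.2 ⟨hl1, hlk⟩)).1 le_rfl
    refine hno ⟨_, hl1, hlk, i, by rwa [sExt, if_neg (by omega)], ?_, hρ⟩
    unfold sExt
    split_ifs with h
    · exact hi.2
    · by_contra! hsi
      have := (le_blockIndex_iff hs (mem_Icc.2 ⟨by omega, by omega⟩)).2 hsi
      omega
  · rintro h ⟨l, hl1, hlk, i, hsl, his, hρ⟩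
    rw [sExt, if_neg (by omega)] at hsl
    have hli := (le_blockIndex_iff hs (mem_Icc.2 ⟨hl1, hlk⟩)).2 hsl
    have := h i (mem_Icc.2 ⟨by omega, his.trans (sExt_succ_le hsn hlk)⟩)
    omega

lemma lucky_and_not_exists_isThreshold_iff {m k : ℕ} {s : ℕ → ℕ}
    (hs : MonotoneOn s (Set.Icc 1 k)) (hsm : ∀ l ∈ Icc 1 k, s l ≤ m)
    (π : Equiv.Perm (Fin (m + 1))) :
    (Lucky (m + 1) k s π ∧ ¬∃ l, IsThreshold (m + 1) k s π l) ↔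
      rho (m + 1) π (m + 1) ≤ k ∧ ∀ i ∈ Icc 1 m, blockIndex k s i < rho (m + 1) π i := by
  have h := not_exists_isThreshold_iff hs (n := m + 1) (by simpa using hsm) π
  rw [Nat.add_sub_cancel] at h
  rw [← h, rho_last, ← pv_val_add_one π (Fin.last m)]
  exact and_congr_left fun hno => by rw [Lucky, if_neg hno, Fin.val_last]

theorem lucky_without_threshold_card_general (n k : ℕ) (hkn : k < n) (s : ℕ → ℕ)
    (hmono : ∀ l ∈ Finset.Icc 1 (k - 1), s l ≤ s (l + 1))
    (hbdd : ∀ l ∈ Finset.Icc 1 k, l ≤ s l ∧ s l ≤ n - 1) :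
    (Nat.card {π : Equiv.Perm (Fin n) //
        Lucky n k s π ∧ ¬∃ l, IsThreshold n k s π l} : ℝ) =
      (k : ℝ) * (Nat.factorial (n - k - 1) : ℝ) *
        ∏ j ∈ Finset.Icc 1 k, ((s j : ℝ) - j + 1) := by
  obtain ⟨m, rfl⟩ : ∃ m, n = m + 1 := ⟨n - 1, by omega⟩
  simp only [Nat.add_sub_cancel] at hbdd
  have hs : MonotoneOn s (Set.Icc 1 k) :=
    monotoneOn_of_le_add_one Set.ordConnected_Icc fun l _ hl hl' =>
      hmono l (by simp only [Set.mem_Icc, mem_Icc] at hl hl' ⊢; omega)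
  have hcount : Nat.card {π : Equiv.Perm (Fin (m + 1)) //
      Lucky (m + 1) k s π ∧ ¬∃ l, IsThreshold (m + 1) k s π l} =
      k * ∏ i ∈ Icc 1 m, (i - blockIndex k s i) := by
    rw [Nat.card_congr (Equiv.subtypeEquivRight
        (lucky_and_not_exists_isThreshold_iff hs fun l hl => (hbdd l hl).2)),
      card_perm_rho_last_and_forall_rho m (· ≤ k) (fun i r => blockIndex k s i < r),
      card_perm_forall_rho m (fun i r => blockIndex k s i < r)]
    congr 1
    · have : {r ∈ Icc 1 (m + 1) | r ≤ k} = Icc 1 k := by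
        ext r; simp only [mem_filter, mem_Icc]; omega
      simp [this]
    · refine prod_congr rfl fun i _ => ?_
      have : {r ∈ Icc 1 i | blockIndex k s i < r} = Ioc (blockIndex k s i) i := by
        ext r; simp only [mem_filter, mem_Icc, mem_Ioc]; omega
      simp [this]
  rw [hcount, prod_sub_blockIndex hs hbdd, (by omega : m + 1 - k - 1 = m - k), Nat.cast_mul,
    Nat.cast_mul, Nat.cast_prod, mul_assoc]
  congr 2
  refine prod_congr rfl fun j hj => ?_
  push_cast [(hbdd j hj).1]
  ring

theorem lucky_without_threshold_card (n k : ℕ) (hk : 1 ≤ k) (hkn : k < n) (s : ℕ → ℕ)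
    (hmono : ∀ l ∈ Finset.Icc 1 (k - 1), s l ≤ s (l + 1))
    (hbdd : ∀ l ∈ Finset.Icc 1 k, l ≤ s l ∧ s l ≤ n - 1) :
    (Nat.card {π : Equiv.Perm (Fin n) //
        Lucky n k s π ∧ ¬∃ l, IsThreshold n k s π l} : ℝ) =
      (k : ℝ) * (Nat.factorial (n - k - 1) : ℝ) *
        ∏ j ∈ Finset.Icc 1 k, ((s j : ℝ) - j + 1) :=
  lucky_without_threshold_card_general n k hkn s hmono hbdd
end Secretary
end

section
/- A permutation π of {1,...,n} belongs to S(Y,Y',l_0,i_0) if and only if the following three conditions hold: (i) π({1,...,i_0}) = Y ∪ Y'; (ii) writing Y = {y_1,...,y_{j_0}} with y_1 < y_2 < ... < y_{j_0}, there exists ι with 1 ≤ ι ≤ min(j_0, l_0) such that π(i_0) = y_ι; (iii) writing π({1,...,i_0-1}) = {y'_1,...,y'_{i_0-1}} with y'_1 < y'_2 < ... < y'_{i_0-1}, one has y'_j ∈ π({1,...,x_j}) for every j ∈ {1,...,l_0}. -/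
open Finset

namespace Secretary

/-! ### Auxiliary lemmas -/

lemma nth_mem (s : Finset ℕ) (j : ℕ) (hj : j < s.card) : (s.sort (· ≤ ·)).getD j 0 ∈ s := by
  rw [List.getD_eq_getElem _ _ (by rwa [Finset.length_sort])]
  exact Finset.mem_sort (· ≤ ·) |>.1 (List.getElem_mem _)

lemma nth_count (s : Finset ℕ) (j : ℕ) (hj : j < s.card) :
    (s.filter (· ≤ (s.sort (· ≤ ·)).getD j 0)).card = j + 1 := by
  set e := s.orderEmbOfFin rfl with he
  have hg : (s.sort (· ≤ ·)).getD j 0 = e ⟨j, hj⟩ := by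
    rw [Finset.orderEmbOfFin_apply, List.getD_eq_getElem _ _ (by rwa [Finset.length_sort])]
    rfl
  have hfe : s.filter (· ≤ e ⟨j, hj⟩) = (Finset.Iic ⟨j, hj⟩).image e := by
    ext x
    simp only [Finset.mem_filter, Finset.mem_image, Finset.mem_Iic]
    constructor
    · rintro ⟨hx, hle⟩
      have : x ∈ Set.range e := by rw [he, Finset.range_orderEmbOfFin]; exact hx
      obtain ⟨i, rfl⟩ := this
      exact ⟨i, e.le_iff_le.1 hle, rfl⟩
    · rintro ⟨i, hij, rfl⟩
      exact ⟨by rw [he]; exact Finset.orderEmbOfFin_mem _ _ _, e.le_iff_le.2 hij⟩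
  rw [hg, hfe, Finset.card_image_of_injective _ e.injective, Fin.card_Iic]

lemma nth_inv (s : Finset ℕ) (v : ℕ) (hv : v ∈ s) :
    1 ≤ (s.filter (· ≤ v)).card ∧ (s.filter (· ≤ v)).card ≤ s.card ∧
      (s.sort (· ≤ ·)).getD ((s.filter (· ≤ v)).card - 1) 0 = v := by
  have h1 : 1 ≤ (s.filter (· ≤ v)).card :=
    Finset.card_pos.2 ⟨v, Finset.mem_filter.2 ⟨hv, le_refl v⟩⟩
  have h2 : (s.filter (· ≤ v)).card ≤ s.card := Finset.card_le_card (Finset.filter_subset _ _)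
  refine ⟨h1, h2, ?_⟩
  set m := (s.filter (· ≤ v)).card with hm
  have hlt : m - 1 < s.card := lt_of_lt_of_le (Nat.sub_lt h1 one_pos) h2
  set u := (s.sort (· ≤ ·)).getD (m - 1) 0 with hu
  have hus : u ∈ s := nth_mem s _ hlt
  have hcu : (s.filter (· ≤ u)).card = m := by
    have := nth_count s _ hlt
    rw [← hu] at this
    omega
  by_contra hne
  rcases lt_or_gt_of_ne hne with h | h
  · have : (s.filter (· ≤ u)).card < m := by
      rw [hm]
      apply Finset.card_lt_card
      constructor
      · intro x hx
        rcases Finset.mem_filter.1 hx with ⟨hx1, hx2⟩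
        exact Finset.mem_filter.2 ⟨hx1, le_trans hx2 h.le⟩
      · intro hsub
        have := Finset.mem_filter.1 (hsub (Finset.mem_filter.2 ⟨hv, le_refl v⟩))
        exact absurd this.2 (not_le.2 h)
    omega
  · have : m < (s.filter (· ≤ u)).card := by
      rw [hm]
      apply Finset.card_lt_card
      constructor
      · intro x hx
        rcases Finset.mem_filter.1 hx with ⟨hx1, hx2⟩
        exact Finset.mem_filter.2 ⟨hx1, le_trans hx2 h.le⟩
      · intro hsub
        have := Finset.mem_filter.1 (hsub (Finset.mem_filter.2 ⟨hus, le_refl u⟩))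
        exact absurd this.2 (not_le.2 h)
    omega

lemma nth_mono (s : Finset ℕ) {a b : ℕ} (hab : a ≤ b) (hb : b < s.card) :
    (s.sort (· ≤ ·)).getD a 0 ≤ (s.sort (· ≤ ·)).getD b 0 := by
  by_contra h
  push_neg at h
  have hsub : s.filter (· ≤ (s.sort (· ≤ ·)).getD b 0) ⊆
      s.filter (· ≤ (s.sort (· ≤ ·)).getD a 0) := by
    intro x hx
    rcases Finset.mem_filter.1 hx with ⟨h1, h2⟩
    exact Finset.mem_filter.2 ⟨h1, le_trans h2 h.le⟩
  have hc := Finset.card_le_card hsub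
  rw [nth_count s b hb, nth_count s a (lt_of_le_of_lt hab hb)] at hc
  have : a = b := by omega
  subst this
  exact lt_irrefl _ h

variable {n : ℕ}

lemma pv_mem (π : Equiv.Perm (Fin n)) {i : ℕ} (h1 : 1 ≤ i) (h2 : i ≤ n) :
    pv n π i ∈ Finset.Icc 1 n := by
  have h : i - 1 < n := by omega
  rw [pv, dif_pos h]
  have := (π ⟨i - 1, h⟩).2
  simp only [Finset.mem_Icc]
  omega

lemma pv_inj (π : Equiv.Perm (Fin n)) {i1 i2 : ℕ} (h1 : 1 ≤ i1) (h2 : i1 ≤ n) (h3 : 1 ≤ i2)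
    (h4 : i2 ≤ n) (h : pv n π i1 = pv n π i2) : i1 = i2 := by
  have ha : i1 - 1 < n := by omega
  have hb : i2 - 1 < n := by omega
  rw [pv, pv, dif_pos ha, dif_pos hb] at h
  have : π ⟨i1 - 1, ha⟩ = π ⟨i2 - 1, hb⟩ := by
    apply Fin.ext; omega
  have := π.injective this
  simp only [Fin.mk.injEq] at this
  omega

lemma card_image_pv (π : Equiv.Perm (Fin n)) {i : ℕ} (h : i ≤ n) :
    ((Finset.Icc 1 i).image (pv n π)).card = i := by
  rw [Finset.card_image_of_injOn, Nat.card_Icc]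
  · omega
  · intro a ha b hb hab
    simp only [Finset.coe_Icc, Set.mem_Icc] at ha hb
    exact pv_inj π ha.1 (le_trans ha.2 h) hb.1 (le_trans hb.2 h) hab

lemma rho_eq_count (π : Equiv.Perm (Fin n)) {i : ℕ} (h : i ≤ n) :
    rho n π i = (((Finset.Icc 1 i).image (pv n π)).filter (· ≤ pv n π i)).card := by
  rw [rho, Finset.filter_image, Finset.card_image_of_injOn]
  intro a ha b hb hab
  simp only [Finset.coe_filter, Set.mem_setOf_eq, Finset.mem_Icc] at ha hb
  exact pv_inj π ha.1.1 (le_trans ha.1.2 h) hb.1.1 (le_trans hb.1.2 h) hab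

lemma s_mono_aux (k : ℕ) (s : ℕ → ℕ) (hmono : ∀ l ∈ Finset.Icc 1 (k - 1), s l ≤ s (l + 1)) :
    ∀ a b, 1 ≤ a → a ≤ b → b ≤ k → s a ≤ s b := by
  intro a b ha hab hbk
  induction b with
  | zero => omega
  | succ m ih =>
    rcases Nat.lt_or_ge a (m + 1) with h | h
    · have h2 : s a ≤ s m := ih (by omega) (by omega)
      exact le_trans h2 (hmono m (Finset.mem_Icc.2 ⟨by omega, by omega⟩))
    · have : a = m + 1 := by omega
      subst this
      exact le_refl _

lemma key_contra (π : Equiv.Perm (Fin n)) (s : ℕ → ℕ) (l0 i0 : ℕ)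
    (hi0n : i0 ≤ n)
    (h3 : ∀ j ∈ Finset.Icc 1 l0,
      (((Finset.Icc 1 (i0 - 1)).image (pv n π)).sort (· ≤ ·)).getD (j - 1) 0 ∈
        (Finset.Icc 1 (s j)).image (pv n π))
    (smono : ∀ a b, 1 ≤ a → a ≤ b → b ≤ l0 → s a ≤ s b)
    (hls : ∀ j, 1 ≤ j → j ≤ l0 → j ≤ s j)
    (i l : ℕ) (h1l : 1 ≤ l) (hll0 : l ≤ l0) (hsl : s l < i) (hii0 : i ≤ i0 - 1)
    (hrho : rho n π i ≤ l) : False := by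
  set I' := (Finset.Icc 1 (i0 - 1)).image (pv n π) with hI'
  have hin : i ≤ n := by omega
  have h1i : 1 ≤ i := by have := hls l h1l hll0; omega
  have cardI' : I'.card = i0 - 1 := card_image_pv π (by omega)
  have hji0 : ∀ j, 1 ≤ j → j ≤ l → j ≤ i0 - 1 := by
    intro j hj hjl
    have := hls j hj (le_trans hjl hll0)
    have := smono j l hj hjl hll0
    omega
  have hvmem : ∀ j, 1 ≤ j → j ≤ l →
      ∃ p, 1 ≤ p ∧ p ≤ s j ∧ pv n π p = (I'.sort (· ≤ ·)).getD (j - 1) 0 := by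
    intro j hj hjl
    have := h3 j (Finset.mem_Icc.2 ⟨hj, le_trans hjl hll0⟩)
    rcases Finset.mem_image.1 this with ⟨p, hp, hpv⟩
    rcases Finset.mem_Icc.1 hp with ⟨hp1, hp2⟩
    exact ⟨p, hp1, hp2, hpv⟩
  have hcount : ∀ j, 1 ≤ j → j ≤ l →
      (I'.filter (· ≤ (I'.sort (· ≤ ·)).getD (j - 1) 0)).card = j := by
    intro j hj hjl
    have hlt : j - 1 < I'.card := by rw [cardI']; have := hji0 j hj hjl; omega
    have := nth_count I' (j - 1) hlt
    omega
  have hlcard : l - 1 < I'.card := by rw [cardI']; have := hji0 l h1l le_rfl; omega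
  by_cases hcmp : pv n π i ≤ (I'.sort (· ≤ ·)).getD (l - 1) 0
  · have hiI' : pv n π i ∈ I' :=
      Finset.mem_image.2 ⟨i, Finset.mem_Icc.2 ⟨h1i, hii0⟩, rfl⟩
    obtain ⟨hm1, hm2, hmv⟩ := nth_inv I' (pv n π i) hiI'
    set m := (I'.filter (· ≤ pv n π i)).card with hmdef
    have hml : m ≤ l := by
      have hsub : I'.filter (· ≤ pv n π i) ⊆
          I'.filter (· ≤ (I'.sort (· ≤ ·)).getD (l - 1) 0) := by
        intro x hx
        rcases Finset.mem_filter.1 hx with ⟨ha, hb⟩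
        exact Finset.mem_filter.2 ⟨ha, le_trans hb hcmp⟩
      have := Finset.card_le_card hsub
      rw [hcount l h1l le_rfl] at this
      exact this
    obtain ⟨p, hp1, hp2, hpv⟩ := hvmem m hm1 hml
    rw [hmv] at hpv
    have hsml : s m ≤ s l := smono m l hm1 hml hll0
    have : p = i := pv_inj π hp1 (by omega) h1i hin hpv
    omega
  · push_neg at hcmp
    have hrhoc := rho_eq_count π hin
    set A := (Finset.Icc 1 l).image (fun j => (I'.sort (· ≤ ·)).getD (j - 1) 0) with hA
    have hAsub : A ⊆ ((Finset.Icc 1 i).image (pv n π)).filter (· ≤ pv n π i) := by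
      intro x hx
      rcases Finset.mem_image.1 hx with ⟨j, hj, rfl⟩
      rcases Finset.mem_Icc.1 hj with ⟨hj1, hj2⟩
      obtain ⟨p, hp1, hp2, hpv⟩ := hvmem j hj1 hj2
      have hvjl : (I'.sort (· ≤ ·)).getD (j - 1) 0 ≤ (I'.sort (· ≤ ·)).getD (l - 1) 0 :=
        nth_mono I' (by omega) hlcard
      refine Finset.mem_filter.2 ⟨?_, le_of_lt (lt_of_le_of_lt hvjl hcmp)⟩
      refine Finset.mem_image.2 ⟨p, Finset.mem_Icc.2 ⟨hp1, ?_⟩, hpv⟩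
      have := smono j l hj1 hj2 hll0
      omega
    have hAcard : A.card = l := by
      rw [hA, Finset.card_image_of_injOn, Nat.card_Icc]
      · omega
      · intro a ha b hb hab
        simp only [Finset.coe_Icc, Set.mem_Icc] at ha hb
        have ha' := hcount a ha.1 ha.2
        have hb' := hcount b hb.1 hb.2
        have hab' : (I'.sort (· ≤ ·)).getD (a - 1) 0 = (I'.sort (· ≤ ·)).getD (b - 1) 0 := hab
        rw [hab'] at ha'
        omega
    have hnotin : pv n π i ∉ A := by
      intro hmem
      rcases Finset.mem_image.1 hmem with ⟨j, hj, heq⟩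
      rcases Finset.mem_Icc.1 hj with ⟨hj1, hj2⟩
      have hvjl : (I'.sort (· ≤ ·)).getD (j - 1) 0 ≤ (I'.sort (· ≤ ·)).getD (l - 1) 0 :=
        nth_mono I' (by omega) hlcard
      have heq' : (I'.sort (· ≤ ·)).getD (j - 1) 0 = pv n π i := heq
      rw [heq'] at hvjl
      omega
    have hins : insert (pv n π i) A ⊆
        ((Finset.Icc 1 i).image (pv n π)).filter (· ≤ pv n π i) := by
      intro x hx
      rcases Finset.mem_insert.1 hx with rfl | hx
      · exact Finset.mem_filter.2
          ⟨Finset.mem_image.2 ⟨i, Finset.mem_Icc.2 ⟨h1i, le_rfl⟩, rfl⟩, le_rfl⟩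
      · exact hAsub hx
    have := Finset.card_le_card hins
    rw [Finset.card_insert_of_notMem hnotin, hAcard] at this
    omega

theorem mem_SYY_iff (n k : ℕ) (hk : 1 ≤ k) (hkn : k < n) (s : ℕ → ℕ)
    (hmono : ∀ l ∈ Finset.Icc 1 (k - 1), s l ≤ s (l + 1))
    (hbdd : ∀ l ∈ Finset.Icc 1 k, l ≤ s l ∧ s l ≤ n - 1)
    (l0 i0 : ℕ) (hl0 : l0 ∈ Finset.Icc 1 k)
    (hi0 : s l0 < i0 ∧ i0 ≤ sExt n k s (l0 + 1))
    (Y Y' : Finset ℕ) (hY : Y ⊆ Finset.Icc 1 k) (hY' : Y' ⊆ Finset.Icc (k + 1) n)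
    (hcard : Y.card + Y'.card = i0) (π : Equiv.Perm (Fin n)) :
    SYYMem n k s Y Y' l0 i0 π ↔
      ((Finset.Icc 1 i0).image (pv n π) = Y ∪ Y') ∧
      (∃ ι ∈ Finset.Icc 1 (min Y.card l0),
        pv n π i0 = (Y.sort (· ≤ ·)).getD (ι - 1) 0) ∧
      (∀ j ∈ Finset.Icc 1 l0,
        (((Finset.Icc 1 (i0 - 1)).image (pv n π)).sort (· ≤ ·)).getD (j - 1) 0 ∈
          (Finset.Icc 1 (s j)).image (pv n π)) := by
  have hl01 : 1 ≤ l0 := (Finset.mem_Icc.1 hl0).1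
  have hl0k : l0 ≤ k := (Finset.mem_Icc.1 hl0).2
  have hn1 : 1 ≤ n := by omega
  have hsl0 := hbdd l0 hl0
  have hi0n : i0 ≤ n - 1 := by
    rcases hi0 with ⟨_, h2⟩
    by_cases hc : l0 + 1 = k + 1
    · rw [sExt, if_pos hc] at h2; exact h2
    · rw [sExt, if_neg hc] at h2
      exact le_trans h2 (hbdd (l0 + 1) (Finset.mem_Icc.2 ⟨by omega, by omega⟩)).2
  have hi0nn : i0 ≤ n := by omega
  have hi0pos : 1 ≤ i0 := by have := hi0.1; omega
  have smono : ∀ a b, 1 ≤ a → a ≤ b → b ≤ k → s a ≤ s b := s_mono_aux k s hmono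
  have hls : ∀ j, 1 ≤ j → j ≤ k → j ≤ s j := fun j h1 h2 =>
    (hbdd j (Finset.mem_Icc.2 ⟨h1, h2⟩)).1
  have hl0i0 : l0 ≤ i0 - 1 := by have := hls l0 hl01 hl0k; have := hi0.1; omega
  have cardI0' : ((Finset.Icc 1 (i0 - 1)).image (pv n π)).card = i0 - 1 :=
    card_image_pv π (by omega)
  have hIsub : ∀ x ∈ (Finset.Icc 1 i0).image (pv n π), 1 ≤ x ∧ x ≤ n := by
    intro x hx
    rcases Finset.mem_image.1 hx with ⟨p, hp, rfl⟩
    rcases Finset.mem_Icc.1 hp with ⟨hp1, hp2⟩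
    exact Finset.mem_Icc.1 (pv_mem π hp1 (le_trans hp2 hi0nn))
  constructor
  · rintro ⟨⟨hL, hlst, hist⟩, hY1, hY2⟩
    have hex : ∃ l, IsThreshold n k s π l := ⟨l0, hlst.1⟩
    have hsInfl : sInf {l | IsThreshold n k s π l} = l0 := hlst.csInf_eq
    have hsInfi : sInf {i | IsElem n k s π l0 i} = i0 := hist.csInf_eq
    have hLk : pv n π i0 ≤ k := by
      unfold Lucky at hL
      rw [if_pos hex, hsInfl, hsInfi] at hL
      exact hL
    have hpvY : pv n π i0 ∈ Y := by
      rw [← hY1]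
      refine Finset.mem_inter.2
        ⟨Finset.mem_image.2 ⟨i0, Finset.mem_Icc.2 ⟨hi0pos, le_rfl⟩, rfl⟩, ?_⟩
      have := pv_mem π hi0pos hi0nn
      rw [Finset.mem_Icc] at this ⊢
      omega
    obtain ⟨hι1, hι2, hιv⟩ := nth_inv Y (pv n π i0) hpvY
    set ι := (Y.filter (· ≤ pv n π i0)).card with hιdef
    have hfilter_eq : ((Finset.Icc 1 i0).image (pv n π)).filter (· ≤ pv n π i0) =
        Y.filter (· ≤ pv n π i0) := by
      ext x
      simp only [Finset.mem_filter]
      constructor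
      · rintro ⟨hx, hxle⟩
        refine ⟨?_, hxle⟩
        rw [← hY1]
        exact Finset.mem_inter.2
          ⟨hx, Finset.mem_Icc.2 ⟨(hIsub x hx).1, le_trans hxle hLk⟩⟩
      · rintro ⟨hx, hxle⟩
        refine ⟨?_, hxle⟩
        rw [← hY1] at hx
        exact (Finset.mem_inter.1 hx).1
    have hrhoi0 : rho n π i0 = ι := by
      rw [rho_eq_count π hi0nn, hfilter_eq]
    have hrhole : rho n π i0 ≤ l0 := hist.1.2.2
    refine ⟨?_, ⟨ι, Finset.mem_Icc.2 ⟨hι1, le_min hι2 (by omega)⟩, hιv.symm⟩, ?_⟩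
    · ext x
      constructor
      · intro hx
        have hxb := hIsub x hx
        rcases Nat.lt_or_ge k x with hk' | hk'
        · rw [Finset.mem_union]; right; rw [← hY2]
          exact Finset.mem_inter.2 ⟨hx, Finset.mem_Icc.2 ⟨by omega, hxb.2⟩⟩
        · rw [Finset.mem_union]; left; rw [← hY1]
          exact Finset.mem_inter.2 ⟨hx, Finset.mem_Icc.2 ⟨hxb.1, hk'⟩⟩
      · intro hx
        rcases Finset.mem_union.1 hx with hx | hx
        · rw [← hY1] at hx; exact (Finset.mem_inter.1 hx).1
        · rw [← hY2] at hx; exact (Finset.mem_inter.1 hx).1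
    · intro j hj
      rcases Finset.mem_Icc.1 hj with ⟨hj1, hj2⟩
      have hjcard : j - 1 < i0 - 1 := by
        have := smono j l0 hj1 hj2 hl0k
        have := hls j hj1 (le_trans hj2 hl0k)
        omega
      have hvmem := nth_mem ((Finset.Icc 1 (i0 - 1)).image (pv n π)) (j - 1)
        (by rw [cardI0']; exact hjcard)
      rcases Finset.mem_image.1 hvmem with ⟨p, hp, hpv⟩
      rcases Finset.mem_Icc.1 hp with ⟨hp1, hp2⟩
      by_cases hps : p ≤ s j
      · exact Finset.mem_image.2 ⟨p, Finset.mem_Icc.2 ⟨hp1, hps⟩, hpv⟩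
      push_neg at hps
      exfalso
      have hpn : p ≤ n := by omega
      have hrhop : rho n π p ≤ j := by
        rw [rho_eq_count π hpn]
        have hsub : ((Finset.Icc 1 p).image (pv n π)).filter (· ≤ pv n π p) ⊆
            ((Finset.Icc 1 (i0 - 1)).image (pv n π)).filter (· ≤ pv n π p) := by
          apply Finset.filter_subset_filter
          exact Finset.image_subset_image (Finset.Icc_subset_Icc le_rfl hp2)
        have hc := Finset.card_le_card hsub
        have hcnt := nth_count ((Finset.Icc 1 (i0 - 1)).image (pv n π)) (j - 1)
          (by rw [cardI0']; exact hjcard)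
        rw [← hpv] at hcnt
        omega
      have hTne : ((Finset.Icc j l0).filter (fun m => s m < p)).Nonempty :=
        ⟨j, Finset.mem_filter.2 ⟨Finset.mem_Icc.2 ⟨le_rfl, hj2⟩, hps⟩⟩
      obtain ⟨l, hlmem, hlmax⟩ :
          ∃ l ∈ (Finset.Icc j l0).filter (fun m => s m < p),
            ∀ x ∈ (Finset.Icc j l0).filter (fun m => s m < p), x ≤ l :=
        ⟨_, Finset.max'_mem _ hTne, fun x hx => Finset.le_max' _ x hx⟩
      rw [Finset.mem_filter, Finset.mem_Icc] at hlmem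
      obtain ⟨⟨hjl, hll0⟩, hslp⟩ := hlmem
      rcases eq_or_lt_of_le hll0 with heq | hlt
      · have helem : IsElem n k s π l0 p := by
          refine ⟨?_, ?_, le_trans hrhop hj2⟩
          · rw [sExt, if_neg (by omega)]
            exact heq ▸ hslp
          · have h2 := hi0.2
            omega
        have := hist.2 helem
        omega
      · have hnotT : l + 1 ∉ (Finset.Icc j l0).filter (fun m => s m < p) := by
          intro hmem
          have := hlmax (l + 1) hmem
          omega
        have hpsl1 : p ≤ s (l + 1) := by
          by_contra hcon
          push_neg at hcon
          exact hnotT (Finset.mem_filter.2 ⟨Finset.mem_Icc.2 ⟨by omega, by omega⟩, hcon⟩)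
        have hthr : IsThreshold n k s π l := by
          refine ⟨by omega, by omega, p, ?_, ?_, le_trans hrhop hjl⟩
          · rw [sExt, if_neg (by omega)]
            exact hslp
          · rw [sExt, if_neg (by omega)]
            exact hpsl1
        have := hlst.2 hthr
        omega
  · rintro ⟨h1, h2, h3⟩
    obtain ⟨ι, hι, hpvι⟩ := h2
    rcases Finset.mem_Icc.1 hι with ⟨hι1, hιm⟩
    have hιY : ι ≤ Y.card := le_trans hιm (min_le_left _ _)
    have hιl0 : ι ≤ l0 := le_trans hιm (min_le_right _ _)
    have hιlt : ι - 1 < Y.card := by omega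
    have hpvY : pv n π i0 ∈ Y := by rw [hpvι]; exact nth_mem Y _ hιlt
    have hcnt : (Y.filter (· ≤ pv n π i0)).card = ι := by
      have := nth_count Y (ι - 1) hιlt
      rw [← hpvι] at this
      omega
    have hpvk : pv n π i0 ≤ k := (Finset.mem_Icc.1 (hY hpvY)).2
    have hY1 : ((Finset.Icc 1 i0).image (pv n π)) ∩ Finset.Icc 1 k = Y := by
      rw [h1]
      ext x
      simp only [Finset.mem_inter, Finset.mem_union]
      constructor
      · rintro ⟨hx | hx, hxk⟩
        · exact hx
        · have ha := Finset.mem_Icc.1 (hY' hx)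
          have hb := Finset.mem_Icc.1 hxk
          omega
      · intro hx
        exact ⟨Or.inl hx, hY hx⟩
    have hY2 : ((Finset.Icc 1 i0).image (pv n π)) ∩ Finset.Icc (k + 1) n = Y' := by
      rw [h1]
      ext x
      simp only [Finset.mem_inter, Finset.mem_union]
      constructor
      · rintro ⟨hx | hx, hxk⟩
        · have ha := Finset.mem_Icc.1 (hY hx)
          have hb := Finset.mem_Icc.1 hxk
          omega
        · exact hx
      · intro hx
        exact ⟨Or.inr hx, hY' hx⟩
    have hfeq : ((Finset.Icc 1 i0).image (pv n π)).filter (· ≤ pv n π i0) =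
        Y.filter (· ≤ pv n π i0) := by
      rw [h1]
      ext x
      simp only [Finset.mem_filter, Finset.mem_union]
      constructor
      · rintro ⟨hx | hx, hxle⟩
        · exact ⟨hx, hxle⟩
        · have := Finset.mem_Icc.1 (hY' hx)
          omega
      · rintro ⟨hx, hxle⟩
        exact ⟨Or.inl hx, hxle⟩
    have hrhoi0 : rho n π i0 = ι := by rw [rho_eq_count π hi0nn, hfeq, hcnt]
    have helem0 : IsElem n k s π l0 i0 := by
      refine ⟨?_, hi0.2, by omega⟩
      rw [sExt, if_neg (by omega)]
      exact hi0.1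
    have hkey : ∀ i l, 1 ≤ l → l ≤ l0 → s l < i → i ≤ i0 - 1 → rho n π i ≤ l → False :=
      key_contra π s l0 i0 hi0nn h3
        (fun a b ha hab hb => smono a b ha hab (le_trans hb hl0k))
        (fun j h1j h2j => hls j h1j (le_trans h2j hl0k))
    have hist : IsLeast {i | IsElem n k s π l0 i} i0 := by
      refine ⟨helem0, ?_⟩
      intro i hi'
      obtain ⟨hi1, hi2, hi3⟩ := hi'
      rw [sExt, if_neg (by omega)] at hi1
      by_contra hcon
      push_neg at hcon
      exact hkey i l0 hl01 le_rfl hi1 (by omega) hi3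
    have hlst : IsLeast {l | IsThreshold n k s π l} l0 := by
      refine ⟨⟨hl01, hl0k, i0, helem0⟩, ?_⟩
      intro l hl'
      obtain ⟨hl1, hl2, i, hi1, hi2, hi3⟩ := hl'
      by_contra hcon
      push_neg at hcon
      rw [sExt, if_neg (by omega)] at hi1
      rw [sExt, if_neg (by omega)] at hi2
      have hii0 : i ≤ i0 - 1 := by
        have hsl1 : s (l + 1) ≤ s l0 := smono (l + 1) l0 (by omega) (by omega) hl0k
        have := hi0.1
        omega
      exact hkey i l hl1 (by omega) hi1 hii0 hi3
    refine ⟨⟨?_, hlst, hist⟩, hY1, hY2⟩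
    unfold Lucky
    rw [if_pos (⟨l0, hlst.1⟩ : ∃ l, IsThreshold n k s π l), hlst.csInf_eq, hist.csInf_eq]
    exact hpvk
end Secretary
end

section
/- Let w_0 = (x_1,...,x_k) be a non-decreasing sequence of integers with l ≤ x_l ≤ n-1 for every l ∈ {1,...,k}. A permutation π of {1,...,n} is lucky for w_0 and has no w_0-threshold if and only if the following two conditions hold: (i) there exists ι ∈ {1,...,k} with π(n) = ι; (ii) writing {1,...,k+1} \ {ι} = {y_1,...,y_k} with y_1 < y_2 < ... < y_k, one has y_j ∈ π({1,...,x_j}) for every j ∈ {1,...,k}. -/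
/-!
Without a threshold, luckiness only says `ι := π(n) ≤ k`, so the point is to characterise the
permutations without threshold. Read on values, `ρ_π(i)` counts the values among
`π(1), …, π(i)` that are at most `π(i)`. If `y_j` sits at a position `i > x_j`, then `i < n`
(since `π(n) = ι`) and the values at most `y_j` seen up to `i` lie in `{1, …, y_j} \ {ι}`, a set
of `j` elements; so `i` is an element for the largest `l` with `x_l < i`. Conversely, if every
`y_j` appears by time `x_j`, a position `i` with `x_l < i < n` has already seen `y_1, …, y_l`,
and its own value differs from these and from `ι`, hence exceeds them all: `ρ_π(i) > l`.
-/

open Finset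

namespace Secretary

/-- The paper's `y_j`: the `j`-th smallest positive integer other than `ι` (for `ι, j ≥ 1`). -/
def skipNth (ι j : ℕ) : ℕ := if j < ι then j else j + 1

theorem skipNth_strictMono (ι : ℕ) : StrictMono (skipNth ι) := by
  intro a b hab
  simp only [skipNth]
  split_ifs <;> omega

theorem skipNth_ne_self (ι j : ℕ) : skipNth ι j ≠ ι := by
  simp only [skipNth]
  split_ifs <;> omega

theorem card_erase_Icc_skipNth {ι : ℕ} (hι : 1 ≤ ι) (j : ℕ) :
    ((Icc 1 (skipNth ι j)).erase ι).card = j := by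
  unfold skipNth
  split_ifs with h
  · rw [erase_eq_of_notMem (by rw [mem_Icc]; omega), Nat.card_Icc]
    omega
  · rw [card_erase_of_mem (by rw [mem_Icc]; omega), Nat.card_Icc]
    omega

theorem skipNth_lt_of_forall_ne {ι l v : ℕ} (hι : 1 ≤ ι) (hv : 1 ≤ v) (hvι : v ≠ ι)
    (hne : ∀ m ∈ Icc 1 l, skipNth ι m ≠ v) {m : ℕ} (hm : m ∈ Icc 1 l) : skipNth ι m < v := by
  by_contra! hle
  -- the preimage of `v` under `skipNth ι` would lie in `[1, m]`
  have := hne (if v < ι then v else v - 1)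
  simp only [skipNth, mem_Icc] at this hle hm
  split_ifs at this hle <;> omega

theorem sort_erase_Icc_eq_map_skipNth {ι k : ℕ} (hι : ι ∈ Icc 1 (k + 1)) :
    ((Icc 1 (k + 1)).erase ι).sort (· ≤ ·) = (List.range' 1 k).map (skipNth ι) := by
  have hmono := skipNth_strictMono ι
  refine List.Perm.eq_of_pairwise' (pairwise_sort _ _)
    (List.pairwise_map.2 ((List.pairwise_lt_range' 1).imp fun h => (hmono h).le)) ?_
  rw [List.perm_ext_iff_of_nodup (sort_nodup _ _) ((List.nodup_range' 1).map hmono.injective)]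
  intro a
  simp only [mem_sort, mem_erase, mem_Icc, List.mem_map, List.mem_range'_1]
  rw [mem_Icc] at hι
  constructor
  · rintro ⟨haι, ha1, hak⟩
    refine ⟨if a < ι then a else a - 1, by split_ifs <;> omega, ?_⟩
    simp only [skipNth]
    split_ifs <;> omega
  · rintro ⟨m, hm, rfl⟩
    refine ⟨skipNth_ne_self ι m, ?_⟩
    simp only [skipNth]
    split_ifs <;> omega

theorem getD_sort_erase_Icc {ι k j : ℕ} (hι : ι ∈ Icc 1 (k + 1)) (hj : j ∈ Icc 1 k) :
    (((Icc 1 (k + 1)).erase ι).sort (· ≤ ·)).getD (j - 1) 0 = skipNth ι j := by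
  rw [mem_Icc] at hj
  have hlen : j - 1 < ((List.range' 1 k).map (skipNth ι)).length := by
    rw [List.length_map, List.length_range']
    omega
  rw [sort_erase_Icc_eq_map_skipNth hι, List.getD_eq_getElem _ _ hlen, List.getElem_map,
    List.getElem_range']
  congr 1
  omega

theorem pv_bijOn (n : ℕ) (π : Equiv.Perm (Fin n)) : Set.BijOn (pv n π) (Icc 1 n) (Icc 1 n) := by
  refine ⟨fun i hi => ?_, fun i hi j hj hij => ?_, fun v hv => ?_⟩
  · simp only [coe_Icc, Set.mem_Icc] at hi ⊢
    rw [pv, dif_pos (by omega)]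
    exact ⟨Nat.le_add_left 1 _, (π _).isLt⟩
  · simp only [coe_Icc, Set.mem_Icc] at hi hj
    rw [pv, pv, dif_pos (by omega), dif_pos (by omega), Nat.add_right_cancel_iff,
      Fin.val_inj, π.apply_eq_iff_eq, Fin.mk.injEq] at hij
    omega
  · simp only [coe_Icc, Set.mem_Icc] at hv
    set i := π.symm ⟨v - 1, by omega⟩
    refine ⟨i + 1, by simp only [coe_Icc, Set.mem_Icc]; omega, ?_⟩
    rw [pv, dif_pos (by omega)]
    simp only [Nat.add_sub_cancel, Fin.eta, i, Equiv.apply_symm_apply]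
    omega

theorem one_le_pv {n : ℕ} (π : Equiv.Perm (Fin n)) {i : ℕ} (hi : 1 ≤ i) (hin : i ≤ n) :
    1 ≤ pv n π i :=
  (mem_Icc.1 ((pv_bijOn n π).mapsTo (mem_Icc.2 ⟨hi, hin⟩))).1

theorem rho_eq_card_filter_image {n : ℕ} (π : Equiv.Perm (Fin n)) {i : ℕ} (hin : i ≤ n) :
    rho n π i = (((Icc 1 i).image (pv n π)).filter (· ≤ pv n π i)).card := by
  rw [rho, filter_image, card_image_of_injOn]
  exact (pv_bijOn n π).injOn.mono
    (coe_subset.2 ((filter_subset _ _).trans (Icc_subset_Icc_right hin)))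

theorem rho_le_of_pv_eq_skipNth {n : ℕ} (π : Equiv.Perm (Fin n)) {i j : ℕ} (hin : i < n)
    (hy : pv n π i = skipNth (pv n π n) j) : rho n π i ≤ j := by
  rw [rho_eq_card_filter_image π hin.le, ← card_erase_Icc_skipNth (one_le_pv π (by omega) le_rfl) j,
    ← hy]
  refine card_le_card fun v hv => ?_
  simp only [mem_filter, mem_image, mem_Icc] at hv
  obtain ⟨⟨q, ⟨hq1, hqi⟩, rfl⟩, hle⟩ := hv
  refine mem_erase.2 ⟨fun hqn => ?_, mem_Icc.2 ⟨one_le_pv π hq1 (by omega), hle⟩⟩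
  have := (pv_bijOn n π).injOn (mem_Icc.2 ⟨hq1, by omega⟩) (mem_Icc.2 ⟨by omega, le_rfl⟩) hqn
  omega

theorem lt_rho_of_forall_skipNth_mem {n : ℕ} (π : Equiv.Perm (Fin n)) {i l : ℕ} (hi : 1 ≤ i)
    (hin : i < n) (hy : ∀ m ∈ Icc 1 l, skipNth (pv n π n) m ∈ (Ico 1 i).image (pv n π)) :
    l < rho n π i := by
  have hbij := pv_bijOn n π
  set ι := pv n π n
  set v := pv n π i
  have hι : 1 ≤ ι := one_le_pv π (by omega) le_rfl
  have hv : 1 ≤ v := one_le_pv π hi hin.le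
  have hvι : v ≠ ι := fun h => by
    have := hbij.injOn (mem_Icc.2 ⟨hi, hin.le⟩) (mem_Icc.2 ⟨by omega, le_rfl⟩) h
    omega
  have hv_new : v ∉ (Ico 1 i).image (pv n π) := by
    intro hv_mem
    obtain ⟨q, hq, hqi⟩ := mem_image.1 hv_mem
    rw [mem_Ico] at hq
    have := hbij.injOn (mem_Icc.2 ⟨hq.1, by omega⟩) (mem_Icc.2 ⟨hi, hin.le⟩) hqi
    omega
  have hlt : ∀ m ∈ Icc 1 l, skipNth ι m < v :=
    fun m => skipNth_lt_of_forall_ne hι hv hvι fun m' hm' h => hv_new (h ▸ hy m' hm')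
  have hsub :
      insert v ((Icc 1 l).image (skipNth ι)) ⊆ ((Icc 1 i).image (pv n π)).filter (· ≤ v) := by
    refine insert_subset (mem_filter.2 ⟨mem_image_of_mem _ (mem_Icc.2 ⟨hi, le_rfl⟩), le_rfl⟩) ?_
    intro y hy'
    obtain ⟨m, hm, rfl⟩ := mem_image.1 hy'
    exact mem_filter.2 ⟨image_subset_image Ico_subset_Icc_self (hy m hm), (hlt m hm).le⟩
  have hv_notMem : v ∉ (Icc 1 l).image (skipNth ι) := by
    simp only [mem_image, not_exists, not_and]
    exact fun m hm h => (hlt m hm).ne h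
  calc l < ((Icc 1 l).image (skipNth ι)).card + 1 := by
        rw [card_image_of_injective _ (skipNth_strictMono ι).injective, Nat.card_Icc]; omega
    _ = (insert v ((Icc 1 l).image (skipNth ι))).card := (card_insert_of_notMem hv_notMem).symm
    _ ≤ _ := card_le_card hsub
    _ = rho n π i := (rho_eq_card_filter_image π hin.le).symm

theorem exists_threshold_of_rho_le {n k : ℕ} {s : ℕ → ℕ} {π : Equiv.Perm (Fin n)} {i j : ℕ}
    (hj : j ∈ Icc 1 k) (hsj : s j < i) (hin : i ≤ n - 1) (hρ : rho n π i ≤ j) :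
    ∃ l, IsThreshold n k s π l := by
  rw [mem_Icc] at hj
  -- the block `(s l, sExt (l + 1)]` containing `i`
  set l := Nat.findGreatest (fun m => s m < i) k
  have hjl : j ≤ l := Nat.le_findGreatest (P := fun m => s m < i) hj.2 hsj
  have hlk : l ≤ k := Nat.findGreatest_le k
  refine ⟨l, by omega, hlk, i, ?_, ?_, by omega⟩
  · rw [sExt, if_neg (by omega)]
    exact Nat.findGreatest_spec (P := fun m => s m < i) hj.2 hsj
  · rw [sExt]
    split_ifs with hl
    · exact hin
    · by_contra! h
      exact Nat.findGreatest_is_greatest (Nat.lt_succ_self l) (by omega) h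

theorem not_exists_threshold_iff {n k : ℕ} {s : ℕ → ℕ} (π : Equiv.Perm (Fin n)) (hkn : k < n)
    (hmono : ∀ l ∈ Icc 1 (k - 1), s l ≤ s (l + 1)) (hbdd : ∀ l ∈ Icc 1 k, s l ≤ n - 1) :
    (¬∃ l, IsThreshold n k s π l) ↔
      ∀ j ∈ Icc 1 k, skipNth (pv n π n) j ∈ (Icc 1 (s j)).image (pv n π) := by
  constructor
  · intro hT j hj
    by_contra hy
    have hyn : skipNth (pv n π n) j ∈ Icc 1 n := by
      simp only [skipNth, mem_Icc] at hj ⊢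
      split_ifs <;> omega
    obtain ⟨i, hi, hpi⟩ := (pv_bijOn n π).surjOn hyn
    simp only [coe_Icc, Set.mem_Icc] at hi
    have hin : i ≠ n := by
      rintro rfl
      exact skipNth_ne_self _ _ hpi.symm
    have hsj : s j < i := by
      by_contra! h
      exact hy (mem_image.2 ⟨i, mem_Icc.2 ⟨hi.1, h⟩, hpi⟩)
    exact hT (exists_threshold_of_rho_le hj hsj (by omega)
      (rho_le_of_pv_eq_skipNth π (by omega) hpi))
  · rintro hy ⟨l, hl1, hlk, i, hsi, hil, hρ⟩
    rw [sExt, if_neg (by omega)] at hsi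
    have hin : i < n := by
      rw [sExt] at hil
      split_ifs at hil with hl
      · omega
      · have := hbdd (l + 1) (mem_Icc.2 ⟨by omega, by omega⟩)
        omega
    have hs : MonotoneOn s (Set.Icc 1 k) := monotoneOn_of_le_add_one Set.ordConnected_Icc
      fun m _ hm hm1 => hmono m (by simp only [Set.mem_Icc, mem_Icc] at hm hm1 ⊢; omega)
    refine absurd hρ (not_le.2 (lt_rho_of_forall_skipNth_mem π (by omega) hin fun m hm => ?_))
    rw [mem_Icc] at hm
    obtain ⟨q, hq, hpq⟩ := mem_image.1 (hy m (mem_Icc.2 ⟨hm.1, by omega⟩))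
    rw [mem_Icc] at hq
    have hsm : s m ≤ s l := hs ⟨hm.1, by omega⟩ ⟨hl1, hlk⟩ hm.2
    exact mem_image.2 ⟨q, mem_Ico.2 ⟨hq.1, by omega⟩, hpq⟩

theorem lucky_iff_of_not_exists_threshold {n k : ℕ} {s : ℕ → ℕ} {π : Equiv.Perm (Fin n)}
    (hT : ¬∃ l, IsThreshold n k s π l) : Lucky n k s π ↔ pv n π n ≤ k := by
  rw [Lucky, if_neg hT]

theorem lucky_without_threshold_iff_general (n k : ℕ) (hkn : k < n) (s : ℕ → ℕ)
    (hmono : ∀ l ∈ Finset.Icc 1 (k - 1), s l ≤ s (l + 1))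
    (hbdd : ∀ l ∈ Finset.Icc 1 k, l ≤ s l ∧ s l ≤ n - 1) (π : Equiv.Perm (Fin n)) :
    (Lucky n k s π ∧ ¬∃ l, IsThreshold n k s π l) ↔
      ∃ ι ∈ Finset.Icc 1 k, pv n π n = ι ∧
        ∀ j ∈ Finset.Icc 1 k,
          (((Finset.Icc 1 (k + 1)).erase ι).sort (· ≤ ·)).getD (j - 1) 0 ∈
            (Finset.Icc 1 (s j)).image (pv n π) := by
  have hthr := not_exists_threshold_iff π hkn hmono fun l hl => (hbdd l hl).2
  have hι : 1 ≤ pv n π n := one_le_pv π (by omega) le_rfl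
  constructor
  · rintro ⟨hlucky, hT⟩
    have hιk := (lucky_iff_of_not_exists_threshold hT).1 hlucky
    refine ⟨pv n π n, mem_Icc.2 ⟨hι, hιk⟩, rfl, fun j hj => ?_⟩
    rw [getD_sort_erase_Icc (mem_Icc.2 ⟨hι, by omega⟩) hj]
    exact hthr.1 hT j hj
  · rintro ⟨_, hιk, rfl, hy⟩
    have hT := hthr.2 fun j hj => by
      rw [← getD_sort_erase_Icc (mem_Icc.2 ⟨hι, by have := (mem_Icc.1 hιk).2; omega⟩) hj]
      exact hy j hj
    exact ⟨(lucky_iff_of_not_exists_threshold hT).2 (mem_Icc.1 hιk).2, hT⟩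

theorem lucky_without_threshold_iff (n k : ℕ) (hk : 1 ≤ k) (hkn : k < n) (s : ℕ → ℕ)
    (hmono : ∀ l ∈ Finset.Icc 1 (k - 1), s l ≤ s (l + 1))
    (hbdd : ∀ l ∈ Finset.Icc 1 k, l ≤ s l ∧ s l ≤ n - 1) (π : Equiv.Perm (Fin n)) :
    (Lucky n k s π ∧ ¬∃ l, IsThreshold n k s π l) ↔
      ∃ ι ∈ Finset.Icc 1 k, pv n π n = ι ∧
        ∀ j ∈ Finset.Icc 1 k,
          (((Finset.Icc 1 (k + 1)).erase ι).sort (· ≤ ·)).getD (j - 1) 0 ∈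
            (Finset.Icc 1 (s j)).image (pv n π) :=
  lucky_without_threshold_iff_general n k hkn s hmono hbdd π

end Secretary
end

section
/- For every w = (x_1,...,x_k) ∈ X^{(k)} and every l ∈ {0,1,...,k}, writing x̃_i := x_i - i + 1 for i ∈ {1,...,k}, one has D_l(σ^l(w)) = Σ_{i=l}^{k-1} (Π_{j=l+1}^{i} x̃_j) · d_i(x̃_{i+1}) + (Π_{j=l+1}^{k} x̃_j) · δ_{k,n}, where empty sums are 0 and empty products are 1. -/
open Finset

namespace Secretary

/-!
Two pointwise identities drive the proof: `r_{i-1}(x) - (x - i)·r_i(x) = d_i(x - i)` for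
`i < x < n`, and `r_{k-1}(n-1) - ξ_{k,n} = δ_{k,n}`. Splitting off the first term of `T_l`
and using the first identity gives the affine recurrence
`D_l(σ^l w) = d_l(x̃_{l+1}) + x̃_{l+1}·D_{l+1}(σ^{l+1} w)`, the second gives `D_k = δ_{k,n}`,
and unrolling the recurrence from `l` up to `k` yields the formula.

For `i ≥ 2` the first identity comes down to `(i-1)·S_i - i·S_{i-1} = Σ_j j·C(k,j)·C(n-k,x-j)
= k·Σ_j C(k-1,j-1)·C(n-k,x-j)`, where `S_i` is the sum occurring in `r_i`; for `i = 1` it is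
Pascal's rule together with `C(n,k)·C(n-k,x) = C(n,x)·C(n-x,k)`.
-/

lemma Cb_natCast (a b : ℕ) : Cb a b = a.choose b := by
  unfold Cb
  by_cases h : b ≤ a
  · simp [h]
  · simp [show ¬ (b : ℤ) ≤ a by exact_mod_cast h, Nat.choose_eq_zero_of_lt (not_le.mp h)]

lemma Cb_eq_zero_of_lt {a b : ℤ} (h : a < b) : Cb a b = 0 :=
  if_neg fun hab => by omega

lemma Cb_ne_zero {a b : ℕ} (h : b ≤ a) : Cb a b ≠ 0 := by
  rw [Cb_natCast]
  exact_mod_cast (Nat.choose_pos h).ne'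

lemma Cb_zero_right {a : ℤ} (ha : 0 ≤ a) : Cb a 0 = 1 := by
  simp [Cb, ha]

lemma Cb_add_one_add_one {a b : ℤ} (ha : 0 ≤ a) (hb : 0 ≤ b) :
    Cb (a + 1) (b + 1) = Cb a b + Cb a (b + 1) := by
  lift a to ℕ using ha
  lift b to ℕ using hb
  rw [← Nat.cast_succ, ← Nat.cast_succ, Cb_natCast, Cb_natCast, Cb_natCast,
    Nat.choose_succ_succ', Nat.cast_add]

lemma add_one_mul_Cb_add_one (k j : ℕ) : ((j : ℝ) + 1) * Cb k (j + 1) = k * Cb (k - 1) j := by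
  rcases k with _ | k
  · simp [Cb_eq_zero_of_lt (show (0 : ℤ) < j + 1 by omega)]
  · have h := Nat.add_one_mul_choose_eq k j
    have e : ((k + 1 : ℕ) : ℤ) - 1 = k := by push_cast; ring
    rw [e, show (j : ℤ) + 1 = ((j + 1 : ℕ) : ℤ) by push_cast; ring, Cb_natCast, Cb_natCast]
    exact_mod_cast (by linarith [h] : (j + 1) * (k + 1).choose (j + 1) = (k + 1) * k.choose j)

lemma choose_mul_choose_sub_comm (n k x : ℕ) :
    n.choose k * (n - k).choose x = n.choose x * (n - x).choose k := by
  have h1 := Nat.choose_mul (n := n) (k := k + x) (s := k) (by omega)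
  have h2 := Nat.choose_mul (n := n) (k := k + x) (s := x) (by omega)
  simp only [Nat.add_sub_cancel_left, Nat.add_sub_cancel] at h1 h2
  rw [← h1, ← h2, Nat.choose_symm_add]

lemma sum_range_mul_Cb (k m : ℕ) (f : ℕ → ℝ) :
    ∑ j ∈ range (m + 1), (j : ℝ) * Cb k j * f j = k * ∑ j ∈ range m, Cb (k - 1) j * f (j + 1) := by
  rw [sum_range_succ', mul_sum]
  simp only [Nat.cast_zero, zero_mul, add_zero]
  refine sum_congr rfl fun j _ => ?_
  push_cast
  linear_combination f (j + 1) * add_one_mul_Cb_add_one k j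

lemma Cb_mul_Cb_sub_comm {n k x : ℕ} (hk : k ≤ n) (hx : x ≤ n) :
    Cb n k * Cb ((n : ℤ) - k) x = Cb n x * Cb ((n : ℤ) - x) k := by
  rw [← Nat.cast_sub hk, ← Nat.cast_sub hx, Cb_natCast, Cb_natCast, Cb_natCast, Cb_natCast]
  exact_mod_cast choose_mul_choose_sub_comm n k x

lemma rr_natCast_of_pos (n k : ℕ) {l : ℕ} (hl : 1 ≤ l) (x : ℕ) :
    rr n k l x = ((x - l - 1).factorial / x.factorial : ℝ) *
      (1 - (1 / ((l : ℝ) * Cb n x)) *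
        ∑ j ∈ range (l + 1), ((l : ℝ) - j) * Cb k j * Cb ((n : ℤ) - k) ((x : ℤ) - j)) := by
  simp [rr, show l ≠ 0 by omega]

lemma d_zero (n k : ℕ) {x : ℕ} (hx : x ≠ 0) : d n k 0 x = -(x * rr n k 0 x) := by
  simp only [d, rr, if_pos, lt_irrefl, if_false]
  field_simp
  ring

lemma rr_one (n k : ℕ) {x : ℕ} (hx : 2 ≤ x) :
    rr n k 1 x = (1 - Cb ((n : ℤ) - k) x / Cb n x) / (x * (x - 1)) := by
  obtain ⟨y, rfl⟩ : ∃ y, x = y + 2 := ⟨x - 2, by omega⟩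
  have hfac : ((y + 2).factorial : ℝ) = (y + 2) * (y + 1) * y.factorial := by
    push_cast [Nat.factorial_succ]; ring
  rw [← Nat.cast_one, rr_natCast_of_pos n k le_rfl, sum_range_succ, sum_range_one, hfac]
  push_cast
  rw [Cb_zero_right (by positivity), show (y : ℝ) + 2 - 1 = y + 1 by ring]
  simp only [sub_zero, sub_self, zero_mul, add_zero, one_mul]
  field_simp

lemma rr_zero_sub_mul_rr_one {n k x : ℕ} (hk : 1 ≤ k) (hkn : k < n) (hx : 2 ≤ x)
    (hxn : x < n) : rr n k 0 x - (x - 1) * rr n k 1 x = d n k 1 (x - 1) := by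
  have hpascal : Cb ((n : ℤ) - x - 1) ((k : ℤ) - 1) + Cb ((n : ℤ) - x - 1) k
      = Cb ((n : ℤ) - x) k := by
    have h := Cb_add_one_add_one (a := (n : ℤ) - x - 1) (b := (k : ℤ) - 1) (by omega) (by omega)
    simp only [sub_add_cancel] at h
    linarith
  have hCk := Cb_ne_zero hkn.le
  have hCx := Cb_ne_zero hxn.le
  have hratio : Cb ((n : ℤ) - k) x / Cb n x = Cb ((n : ℤ) - x) k / Cb n k := by
    rw [div_eq_div_iff hCx hCk]
    linarith [Cb_mul_Cb_sub_comm hkn.le hxn.le]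
  obtain ⟨y, rfl⟩ : ∃ y, x = y + 1 := ⟨x - 1, by omega⟩
  have hy : (y : ℝ) ≠ 0 := by exact_mod_cast (show y ≠ 0 by omega)
  rw [rr_one n k hx, hratio, ← hpascal]
  simp only [rr, d, lt_irrefl, if_false, if_true, one_ne_zero, Nat.add_sub_cancel,
    sum_Icc_succ_top (show 1 ≤ y + 1 by omega)]
  push_cast
  rw [add_sub_cancel_right]
  field_simp
  ring

lemma mul_sum_range_sub_mul_sum_range (l : ℕ) (c : ℕ → ℝ) :
    (l : ℝ) * ∑ j ∈ range (l + 2), (((l + 1 : ℕ) : ℝ) - j) * c j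
      - ((l : ℝ) + 1) * ∑ j ∈ range (l + 1), ((l : ℝ) - j) * c j
      = ∑ j ∈ range (l + 1), (j : ℝ) * c j := by
  rw [sum_range_succ _ (l + 1), sub_self, zero_mul, add_zero, mul_sum, mul_sum,
    ← sum_sub_distrib]
  refine sum_congr rfl fun j _ => ?_
  push_cast
  ring

lemma rr_sub_mul_rr_succ {n k l x : ℕ} (hl : 1 ≤ l) (hx : l + 1 < x) (hxn : x ≤ n) :
    rr n k l x - (x - (l + 1 : ℕ)) * rr n k (l + 1 : ℕ) x = d n k (l + 1) (x - (l + 1)) := by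
  have hcomb := mul_sum_range_sub_mul_sum_range l
    (fun j => Cb k j * Cb ((n : ℤ) - k) ((x : ℤ) - j))
  simp only [← mul_assoc] at hcomb
  rw [show l + 2 = (l + 1) + 1 by rfl,
    sum_range_mul_Cb k l (fun j => Cb ((n : ℤ) - k) ((x : ℤ) - j))] at hcomb
  obtain ⟨u, rfl⟩ : ∃ u, x = u + l + 2 := ⟨x - (l + 2), by omega⟩
  have hu : ((u + 1).factorial : ℝ) = (u + 1) * u.factorial := by
    push_cast [Nat.factorial_succ]; ring
  rw [rr_natCast_of_pos n k hl, rr_natCast_of_pos n k (by omega), Cb_natCast,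
    Nat.cast_choose ℝ hxn]
  simp only [d, show l + 1 ≠ 0 by omega, show l + 1 ≠ 1 by omega, if_false,
    show u + l + 2 - l - 1 = u + 1 by omega, show u + l + 2 - (l + 1) = u + 1 by omega,
    show n - (l + 1) - (u + 1) = n - (u + l + 2) by omega, Nat.add_sub_cancel, hu]
  have hQ : ∑ j ∈ range l, Cb ((k : ℤ) - 1) j * Cb ((n : ℤ) - k) ((u + 1 : ℕ) + (l + 1 : ℕ) - j - 1)
      = ∑ j ∈ range l, Cb ((k : ℤ) - 1) j * Cb ((n : ℤ) - k) ((u + l + 2 : ℕ) - (j + 1 : ℕ)) :=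
    sum_congr rfl fun j _ => by push_cast; ring_nf
  rw [hQ]
  generalize ∑ j ∈ range l, Cb ((k : ℤ) - 1) j * Cb ((n : ℤ) - k) ((u + l + 2 : ℕ) - (j + 1 : ℕ))
    = Q at hcomb
  generalize ∑ j ∈ range (l + 1 + 1), (((l + 1 : ℕ) : ℝ) - j) * Cb k j
    * Cb ((n : ℤ) - k) ((u + l + 2 : ℕ) - j) = S' at hcomb
  generalize ∑ j ∈ range (l + 1), ((l : ℝ) - j) * Cb k j
    * Cb ((n : ℤ) - k) ((u + l + 2 : ℕ) - j) = S at hcomb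
  have hS : S = (l * S' - k * Q) / (l + 1) := by
    rw [eq_div_iff (by positivity)]
    linarith
  rw [hS]
  push_cast
  rw [add_sub_cancel_right]
  field_simp
  ring

lemma rr_pred_sub_mul_rr {n k i x : ℕ} (hk : 1 ≤ k) (hkn : k < n) (hix : i < x) (hxn : x < n) :
    rr n k ((i : ℤ) - 1) x - ((x : ℝ) - i) * rr n k i x = d n k i (x - i) := by
  match i with
  | 0 => simp [rr, d_zero n k (show x ≠ 0 by omega)]
  | 1 => simpa using rr_zero_sub_mul_rr_one hk hkn hix hxn
  | l + 2 =>
    rw [show ((l + 2 : ℕ) : ℤ) - 1 = ((l + 1 : ℕ) : ℤ) by push_cast; ring]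
    exact rr_sub_mul_rr_succ (by omega) hix hxn.le

lemma rr_zero_sub_xi_one {n : ℕ} (hn : 2 ≤ n) : rr n 1 0 (n - 1) - xi n 1 = delta n 1 := by
  obtain ⟨p, rfl⟩ : ∃ p, n = p + 2 := ⟨n - 2, by omega⟩
  have hsum : ∑ j ∈ Icc 1 (p + 1), Cb ((p : ℤ) + 2 - j - 1) 0 / (j : ℝ)
      = ∑ j ∈ Icc 1 (p + 1), (j : ℝ)⁻¹ :=
    sum_congr rfl fun j hj => by rw [Cb_zero_right (by simp at hj; omega), one_div]
  have hC : Cb ((p : ℤ) + 2) 1 = (p : ℝ) + 2 := by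
    simpa using Cb_natCast (p + 2) 1
  have hfac : ((p + 2).factorial : ℝ) = (p + 2) * (p + 1) * p.factorial := by
    push_cast [Nat.factorial_succ]; ring
  norm_num [rr, xi, delta, hfac]
  rw [hsum, hC, Cb_eq_zero_of_lt zero_lt_one]
  field_simp
  ring

lemma rr_pred_sub_xi_of_two_le {n k : ℕ} (hk : 2 ≤ k) (hkn : k < n) :
    rr n k ((k : ℤ) - 1) (n - 1) - xi n k = delta n k := by
  have hvanish : ∑ j ∈ range (k - 1 + 1),
      (((k - 1 : ℕ) : ℝ) - j) * Cb k j * Cb ((n : ℤ) - k) (((n - 1 : ℕ) : ℤ) - j) = 0 := by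
    refine sum_eq_zero fun j hj => ?_
    rcases (Nat.lt_succ_iff.mp (mem_range.mp hj)).lt_or_eq with hj | rfl
    · rw [Cb_eq_zero_of_lt (a := (n : ℤ) - k) (by omega), mul_zero]
    · rw [sub_self, zero_mul, zero_mul]
  have hnf : (n.factorial : ℝ) = n * (n - 1).factorial := by
    rw [← Nat.mul_factorial_pred (by omega : n ≠ 0)]; push_cast; ring
  have hkf : ((n - k).factorial : ℝ) = (n - k : ℕ) * (n - k - 1).factorial := by
    rw [← Nat.mul_factorial_pred (by omega : n - k ≠ 0)]; push_cast; ring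
  have hn : (n : ℝ) ≠ 0 := by exact_mod_cast (show n ≠ 0 by omega)
  rw [show (k : ℤ) - 1 = ((k - 1 : ℕ) : ℤ) by omega, rr_natCast_of_pos n k (by omega), hvanish,
    show n - 1 - (k - 1) - 1 = n - k - 1 by omega]
  simp only [xi, delta, show k ≠ 1 by omega, if_false, hnf, hkf]
  push_cast [Nat.cast_sub hkn.le]
  field_simp
  ring

lemma rr_pred_sub_xi {n k : ℕ} (hk : 1 ≤ k) (hkn : k < n) :
    rr n k ((k : ℤ) - 1) (n - 1) - xi n k = delta n k := by
  rcases hk.eq_or_lt with rfl | hk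
  · simpa using rr_zero_sub_xi_one (show 2 ≤ n by omega)
  · exact rr_pred_sub_xi_of_two_le hk hkn

@[to_additive]
lemma prod_eq_prod_Ioc_succ_bot {M : Type*} [CommMonoid M] {a b : ℕ} (hab : a < b) (f : ℕ → M) :
    ∏ i ∈ Ioc a b, f i = f (a + 1) * ∏ i ∈ Ioc (a + 1) b, f i := by
  rw [← insert_Ioc_add_one_left_eq_Ioc hab, prod_insert (by simp)]

lemma eq_sum_prod_of_eq_add_mul {R : Type*} [CommSemiring R] {D a g : ℕ → R} {k : ℕ}
    (h : ∀ l < k, D l = a l + g (l + 1) * D (l + 1)) {l : ℕ} (hl : l ≤ k) :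
    D l = ∑ i ∈ Ico l k, (∏ j ∈ Ioc l i, g j) * a i + (∏ j ∈ Ioc l k, g j) * D k := by
  induction hl using Nat.decreasingInduction with
  | self => simp
  | of_succ l hl ih =>
    have hsplit : ∑ i ∈ Ico (l + 1) k, (∏ j ∈ Ioc l i, g j) * a i
        = g (l + 1) * ∑ i ∈ Ico (l + 1) k, (∏ j ∈ Ioc (l + 1) i, g j) * a i := by
      rw [mul_sum]
      refine sum_congr rfl fun i hi => ?_
      rw [prod_eq_prod_Ioc_succ_bot (by simp at hi; omega), mul_assoc]
    rw [h l hl, ih, sum_eq_sum_Ico_succ_bot hl, hsplit, prod_eq_prod_Ioc_succ_bot hl, Ioc_self,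
      prod_empty, one_mul]
    ring

section Word

variable {n k l : ℕ} (w : ℕ → ℕ)

lemma Gam_one_shift {j : ℕ} (hj : j ≤ k - l) :
    Gam n k l 1 j (shift l w) = ∏ i ∈ Ioc l (l + j), ((w i : ℝ) - i + 1) := by
  rcases j.eq_zero_or_pos with rfl | hj0
  · simp [Gam]
  rw [Gam, if_pos ⟨le_rfl, hj0, hj⟩, ← Icc_add_one_left_eq_Ioc, ← map_add_left_Icc 1 j l, prod_map]
  refine prod_congr rfl fun t _ => ?_
  simp only [shift, addLeftEmbedding_apply, Nat.cast_add]
  ring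

lemma Rmap_shift {j : ℕ} (hj : j ∈ Icc 1 (k - l)) :
    Rmap n k l (shift l w) j = rr n k ((l + j : ℕ) - 1) (w (l + j))
      - rr n k ((l + j : ℕ) - 1) (sExt n k w (l + j + 1)) := by
  rw [mem_Icc] at hj
  simp only [Rmap, if_pos hj, shift, sExt, Nat.cast_add]
  congr 3
  exact propext (by omega)

lemma Tmap_shift (hl : l ≤ k) :
    Tmap n k l (shift l w) = ∑ i ∈ Ioc l k,
        (rr n k ((i : ℤ) - 1) (w i) - rr n k ((i : ℤ) - 1) (sExt n k w (i + 1)))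
          * ∏ t ∈ Ioc l i, ((w t : ℝ) - t + 1)
      + xi n k * ∏ t ∈ Ioc l k, ((w t : ℝ) - t + 1) := by
  have hreindex : Ioc l k = (Icc 1 (k - l)).map (addLeftEmbedding l) := by
    rw [map_add_left_Icc, Nat.add_sub_cancel' hl, Icc_add_one_left_eq_Ioc]
  rw [Tmap, Gam_one_shift w le_rfl, Nat.add_sub_cancel' hl, hreindex, sum_map]
  refine congrArg (· + _) (sum_congr rfl fun j hj => ?_)
  rw [Rmap_shift w hj, Gam_one_shift w (mem_Icc.mp hj).2, addLeftEmbedding_apply]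

lemma Tmap_shift_succ (hl : l < k) :
    Tmap n k l (shift l w) = ((w (l + 1) : ℝ) - (l + 1 : ℕ) + 1) *
      (rr n k l (w (l + 1)) - rr n k l (sExt n k w (l + 2))
        + Tmap n k (l + 1) (shift (l + 1) w)) := by
  have hsum : ∑ i ∈ Ioc (l + 1) k,
        (rr n k ((i : ℤ) - 1) (w i) - rr n k ((i : ℤ) - 1) (sExt n k w (i + 1)))
          * ∏ t ∈ Ioc l i, ((w t : ℝ) - t + 1)
      = ((w (l + 1) : ℝ) - (l + 1 : ℕ) + 1) * ∑ i ∈ Ioc (l + 1) k,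
        (rr n k ((i : ℤ) - 1) (w i) - rr n k ((i : ℤ) - 1) (sExt n k w (i + 1)))
          * ∏ t ∈ Ioc (l + 1) i, ((w t : ℝ) - t + 1) := by
    rw [mul_sum]
    refine sum_congr rfl fun i hi => ?_
    rw [prod_eq_prod_Ioc_succ_bot (by simp at hi; omega)]
    ring
  rw [Tmap_shift w hl.le, Tmap_shift (l := l + 1) w hl, sum_eq_sum_Ioc_succ_bot hl, hsum,
    Nat.Ioc_succ_singleton, prod_singleton, prod_eq_prod_Ioc_succ_bot hl,
    show ((l + 1 : ℕ) : ℤ) - 1 = l by push_cast; ring]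
  ring

lemma Dmap_shift_succ (hk : 1 ≤ k) (hkn : k < n) (hw : memX n k 0 w) (hl : l < k) :
    Dmap n k l (shift l w) = d n k l (w (l + 1) - l)
      + ((w (l + 1) : ℝ) - (l + 1 : ℕ) + 1) * Dmap n k (l + 1) (shift (l + 1) w) := by
  have hwl := hw (l + 1) (by simp; omega)
  have key := rr_pred_sub_mul_rr hk hkn (i := l) (x := w (l + 1)) (by omega) (by omega)
  have hfirst : ∀ m, (if m = k then n - 1 else shift m w 1) = sExt n k w (m + 1) := fun m => by
    simp [sExt, shift]
  simp only [Dmap, hfirst]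
  rw [Tmap_shift_succ w hl, show sExt n k w (l + 1) = w (l + 1) by simp [sExt]; omega]
  push_cast at key ⊢
  rw [add_sub_cancel_right]
  linear_combination key

lemma Dmap_self (hk : 1 ≤ k) (hkn : k < n) : Dmap n k k w = delta n k := by
  simpa [Dmap, Tmap, Gam] using rr_pred_sub_xi hk hkn

end Word

theorem Dmap_shift_eq (n k : ℕ) (hk : 1 ≤ k) (hkn : k < n) (w : ℕ → ℕ)
    (hw : memX n k 0 w) (l : ℕ) (hl : l ≤ k) :
    Dmap n k l (shift l w) =
      (∑ i ∈ Finset.Icc l (k - 1),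
          (∏ j ∈ Finset.Icc (l + 1) i, ((w j : ℝ) - j + 1)) * d n k i (w (i + 1) - i))
        + (∏ j ∈ Finset.Icc (l + 1) k, ((w j : ℝ) - j + 1)) * delta n k := by
  have hunroll := eq_sum_prod_of_eq_add_mul (D := fun m => Dmap n k m (shift m w))
    (a := fun i => d n k i (w (i + 1) - i)) (g := fun j => (w j : ℝ) - j + 1)
    (fun m hm => Dmap_shift_succ w hk hkn hw hm) hl
  rw [hunroll, Dmap_self (shift k w) hk hkn,
    Icc_sub_one_right_eq_Ico_of_not_isMin (by simp; omega)]
  simp only [Icc_add_one_left_eq_Ioc]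
end Secretary
end

section
/- Let l ∈ {1,...,k} and w ∈ X^{(k-l)}. If s is the smallest integer x ∈ {l,...,n-1} such that c_l(x+1) ≤ D_l(w)/l, then s is an optimal point of the map F_{l,w}. Consequently, if t is the smallest integer x ∈ {1,...,n-l} such that d_l(x) ≤ D_l(w)/l, then t + l - 1 is an optimal point of F_{l,w}. -/
open Finset

namespace Secretary

lemma Cb_of_neg (a : ℤ) {b : ℤ} (hb : b < 0) : Cb a b = 0 := by
  simp [Cb, hb.not_ge]

lemma Cb_nonneg (a b : ℤ) : 0 ≤ Cb a b := by
  unfold Cb; split_ifs <;> positivity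

lemma Cb_add_one {a : ℤ} (ha : 0 ≤ a) (b : ℤ) : Cb (a + 1) b = Cb a b + Cb a (b - 1) := by
  lift a to ℕ using ha
  obtain hb | rfl | ⟨m, rfl⟩ : b < 0 ∨ b = 0 ∨ ∃ m : ℕ, b = m + 1 :=
    (lt_trichotomy b 0).imp_right (Or.imp_right fun h => ⟨(b - 1).toNat, by omega⟩)
  · simp [Cb_of_neg _ hb, Cb_of_neg _ (by omega : b - 1 < 0)]
  · rw [Cb_of_neg _ (show (0 : ℤ) - 1 < 0 by norm_num), ← Nat.cast_succ, ← Nat.cast_zero,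
      Cb_natCast, Cb_natCast]
    simp
  · rw [add_sub_cancel_right, ← Nat.cast_succ, ← Nat.cast_succ, Cb_natCast, Cb_natCast, Cb_natCast,
      Nat.choose_succ_succ', Nat.cast_add, add_comm]

lemma mul_Cb {a : ℤ} (ha : 0 ≤ a) (b : ℤ) : (b : ℝ) * Cb a b = (a - b + 1) * Cb a (b - 1) := by
  lift a to ℕ using ha
  obtain hb | rfl | ⟨m, rfl⟩ : b < 0 ∨ b = 0 ∨ ∃ m : ℕ, b = m + 1 :=
    (lt_trichotomy b 0).imp_right (Or.imp_right fun h => ⟨(b - 1).toNat, by omega⟩)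
  · simp [Cb_of_neg _ hb, Cb_of_neg _ (by omega : b - 1 < 0)]
  · simp [Cb_of_neg _ (by norm_num : (-1 : ℤ) < 0)]
  · simp only [add_sub_cancel_right]
    rw [← Nat.cast_succ, Cb_natCast, Cb_natCast]
    rcases le_or_gt m a with h | h
    · have := Nat.choose_succ_right_eq a m
      rw [← Nat.cast_inj (R := ℝ)] at this
      push_cast [Nat.cast_sub h] at this ⊢
      linarith
    · rw [Nat.choose_eq_zero_of_lt h, Nat.choose_eq_zero_of_lt (by omega)]
      simp

open Nat in
lemma choose_pred_mul_factorial {n k y : ℕ} (hk : 1 ≤ k) (hy : y + 2 ≤ n) :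
    ((n - y - 2).choose (k - 1) * n ! : ℝ) =
      k * (y + 1)! * (n - y - 2)! * n.choose k * (n - k).choose (y + 1) := by
  obtain ⟨k, rfl⟩ : ∃ k', k = k' + 1 := ⟨k - 1, by omega⟩
  obtain ⟨r, rfl⟩ : ∃ r, n = y + 2 + r := ⟨n - y - 2, by omega⟩
  simp only [show y + 2 + r - y - 2 = r by omega, add_tsub_cancel_right,
    show y + 2 + r - (k + 1) = y + 1 + r - k by omega]
  rcases le_or_gt k r with h | h
  · rw [Nat.cast_choose ℝ h, Nat.cast_choose ℝ (by omega : k + 1 ≤ y + 2 + r),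
      Nat.cast_choose ℝ (by omega : y + 1 ≤ y + 1 + r - k),
      show y + 2 + r - (k + 1) = y + 1 + r - k by omega,
      show y + 1 + r - k - (y + 1) = r - k by omega, Nat.factorial_succ k]
    field_simp
    push_cast
    ring
  · rw [Nat.choose_eq_zero_of_lt h, Nat.choose_eq_zero_of_lt (by omega : y + 1 + r - k < y + 1)]
    simp

lemma sum_Cb_mul_Cb_recurrence {a b : ℤ} (ha : 0 ≤ a) (hb : 0 ≤ b) (N : ℤ) (m : ℕ) :
    ((a + b + 1 - N : ℤ) : ℝ) * ∑ j ∈ range m, Cb a j * Cb b (N - 1 - j) =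
      N * ∑ j ∈ range m, Cb a j * Cb b (N - j) + m * Cb a m * Cb b (N - m) := by
  induction m with
  | zero => simp
  | succ m ih =>
    have h1 := mul_Cb hb (N - m)
    have h2 := mul_Cb ha (m + 1)
    rw [show N - m - 1 = N - 1 - m by ring] at h1
    rw [add_sub_cancel_right] at h2
    simp only [sum_range_succ, Nat.cast_add, Nat.cast_one, show N - (m + 1) = N - 1 - m by ring]
    push_cast at h1 h2 ih ⊢
    linear_combination ih - Cb a m * h1 - Cb b (N - 1 - m) * h2

lemma d_zero_succ_sub {n y : ℕ} (k : ℕ) (hy : y + 2 ≤ n) :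
    d n k 0 (y + 1) - d n k 0 y = -d n k 1 y := by
  have hpascal : Cb ((n : ℤ) - y - 1) k =
      Cb ((n : ℤ) - ↑(y + 1) - 1) k + Cb ((n : ℤ) - ↑(y + 1) - 1) (k - 1) := by
    rw [← Cb_add_one (by omega)]; congr 1; push_cast; ring
  simp only [d, reduceIte, one_ne_zero, sum_Icc_succ_top (by omega : 1 ≤ y + 1), hpascal]
  field_simp
  push_cast
  ring

lemma d_one_succ_sub {n k y : ℕ} (hk : 1 ≤ k) (hkn : k ≤ n) (hy : y + 2 ≤ n) :
    d n k 1 (y + 1) - d n k 1 y = -2 * d n k 2 y := by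
  have key := choose_pred_mul_factorial hk hy
  have hA : (n.choose k : ℝ) ≠ 0 := by exact_mod_cast (Nat.choose_pos hkn).ne'
  simp only [d, reduceIte, OfNat.ofNat_ne_zero, OfNat.ofNat_ne_one, one_ne_zero,
    sum_Icc_succ_top (by omega : 1 ≤ y + 1), Nat.add_one_sub_one, sum_range_one]
  rw [show (n : ℤ) - ↑(y + 1) - 1 = ↑(n - y - 2) by omega, show (k : ℤ) - 1 = ↑(k - 1) by omega,
    show (y : ℤ) + ↑(2 : ℕ) - ↑(0 : ℕ) - 1 = ↑(y + 1) by push_cast; ring,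
    show (n : ℤ) - k = ↑(n - k) by omega, show n - 2 - y = n - y - 2 by omega]
  simp only [Cb_natCast, Nat.choose_zero_right]
  field_simp
  push_cast [Nat.factorial_succ] at key ⊢
  linear_combination -2 * key

open Nat in
lemma d_succ_sub_of_two_le {n k l y : ℕ} (hk : 1 ≤ k) (hkn : k ≤ n) (hl : 2 ≤ l)
    (hy : y + l + 1 ≤ n) :
    d n k l (y + 1) - d n k l y = -((l : ℝ) + 1) * d n k (l + 1) y := by
  obtain ⟨m, rfl⟩ : ∃ m, l = m + 2 := ⟨l - 2, by omega⟩
  obtain ⟨r, rfl⟩ : ∃ r, n = y + m + 3 + r := ⟨n - y - m - 3, by omega⟩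
  have hrec := sum_Cb_mul_Cb_recurrence (a := k - 1) (b := ↑(y + m + 3 + r) - k) (by omega)
    (by omega) (y + m + 2) (m + 1)
  simp only [d, if_neg (by omega : m + 2 ≠ 0), if_neg (by omega : m + 2 ≠ 1),
    if_neg (by omega : m + 2 + 1 ≠ 0), if_neg (by omega : m + 2 + 1 ≠ 1), sum_range_succ _ (m + 1),
    show m + 2 - 1 = m + 1 by omega, show m + 2 + 1 - 1 = m + 1 + 1 by omega,
    show y + m + 3 + r - (m + 2) - (y + 1) = r by omega,
    show y + m + 3 + r - (m + 2) - y = r + 1 by omega,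
    show y + m + 3 + r - (m + 2 + 1) - y = r by omega, Nat.factorial_succ]
  have e1 : ∀ x : ℕ, ((y + 1 : ℕ) : ℤ) + ((m + 2 : ℕ) : ℤ) - x - 1 = y + m + 2 - x := by
    intro x; push_cast; ring
  have e2 : ∀ x : ℕ, (y : ℤ) + ((m + 2 : ℕ) : ℤ) - x - 1 = y + m + 2 - 1 - x := by
    intro x; push_cast; ring
  have e3 : ∀ x : ℕ, (y : ℤ) + ((m + 2 + 1 : ℕ) : ℤ) - x - 1 = y + m + 2 - x := by
    intro x; push_cast; ring
  simp only [e1, e2, e3]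
  rw [show ((m + 2 : ℕ) : ℝ) - 1 = m + 1 by push_cast; ring,
    show ((m + 2 + 1 : ℕ) : ℝ) - 1 = m + 2 by push_cast; ring]
  field_simp
  push_cast at hrec ⊢
  linear_combination -((y ! : ℝ) * r ! * (m + 3) * (m + 2)) * hrec

lemma d_succ_sub {n k l y : ℕ} (hk : 1 ≤ k) (hkn : k ≤ n) (hy : y + l + 2 ≤ n) :
    d n k l (y + 1) - d n k l y = -((l : ℝ) + 1) * d n k (l + 1) y := by
  rcases (by omega : l = 0 ∨ l = 1 ∨ 2 ≤ l) with rfl | rfl | hl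
  · simpa using d_zero_succ_sub k (by omega : y + 2 ≤ n)
  · rw [d_one_succ_sub hk hkn (by omega)]
    norm_num
  · exact d_succ_sub_of_two_le hk hkn hl (by omega)

lemma d_nonneg {n k l : ℕ} (hl : 2 ≤ l) (x : ℕ) : 0 ≤ d n k l x := by
  obtain ⟨m, rfl⟩ : ∃ m, l = m + 2 := ⟨l - 2, by omega⟩
  rw [d, if_neg (by omega), if_neg (by omega),
    show ((m + 2 : ℕ) : ℝ) - 1 = m + 1 by push_cast; ring]
  exact mul_nonneg (by positivity) (sum_nonneg fun _ _ => mul_nonneg (Cb_nonneg _ _) (Cb_nonneg _ _))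

lemma c_succ_sub {n k l z : ℕ} (hk : 1 ≤ k) (hkn : k ≤ n) (hlz : l ≤ z) (hz : z + 2 ≤ n) :
    c n k l (z + 1) - c n k l z = -((l : ℝ) + 1) * c n k (l + 1) (z + 1) := by
  obtain ⟨y, rfl⟩ : ∃ y, z = y + l := ⟨z - l, by omega⟩
  simp only [c, show y + l + 1 - l = y + 1 by omega, Nat.add_sub_cancel,
    show y + l + 1 - (l + 1) = y by omega]
  exact d_succ_sub hk hkn (by omega)

lemma c_antitoneOn {n k l : ℕ} (hk : 1 ≤ k) (hkn : k ≤ n) (hl : 1 ≤ l) :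
    AntitoneOn (c n k l) (Set.Icc l (n - 1)) := by
  refine antitoneOn_of_succ_le Set.ordConnected_Icc fun z _ ⟨hlz, _⟩ ⟨_, hzn⟩ => ?_
  rw [Order.succ_eq_add_one] at hzn ⊢
  have hstep := c_succ_sub hk hkn hlz (by omega)
  have hc : 0 ≤ c n k (l + 1) (z + 1) := d_nonneg (by omega) _
  nlinarith

lemma isMaxOn_of_isLeast_increment_nonpos {β : Type*} [AddCommGroup β] [LinearOrder β]
    [IsOrderedAddMonoid β] {F g : ℕ → β} {a b s : ℕ}
    (hF : ∀ z, a ≤ z → z < b → F (z + 1) - F z = g z) (hg : AntitoneOn g (Set.Ico a b))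
    (hs : IsLeast {x | x ∈ Set.Icc a b ∧ g x ≤ 0} s) : IsMaxOn F (Set.Icc a b) s := by
  obtain ⟨⟨⟨has, hsb⟩, hgs⟩, hmin⟩ := hs
  have up : MonotoneOn F (Set.Icc a s) :=
    monotoneOn_of_le_succ Set.ordConnected_Icc fun z _ ⟨haz, _⟩ ⟨_, hzs⟩ => by
      rw [Order.succ_eq_add_one] at hzs ⊢
      have hpos : 0 < g z := lt_of_not_ge fun h => by
        have := hmin ⟨⟨haz, by omega⟩, h⟩
        omega
      rw [← sub_nonneg, hF z haz (by omega)]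
      exact hpos.le
  have down : AntitoneOn F (Set.Icc s b) :=
    antitoneOn_of_succ_le Set.ordConnected_Icc fun z _ ⟨hsz, _⟩ ⟨_, hzb⟩ => by
      rw [Order.succ_eq_add_one] at hzb ⊢
      rw [← sub_nonpos, hF z (by omega) (by omega)]
      exact (hg ⟨has, by omega⟩ ⟨by omega, by omega⟩ hsz).trans hgs
  refine isMaxOn_iff.mpr fun x hx => ?_
  rcases le_total x s with h | h
  · exact up ⟨hx.1, h⟩ ⟨has, le_rfl⟩ h
  · exact down ⟨le_rfl, hsb⟩ ⟨h, hx.2⟩ h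

lemma isLeast_add_sub_one {P : ℕ → Prop} {a l t : ℕ} (hl : 1 ≤ l) (hla : l ≤ a)
    (ht : IsLeast {x | x ∈ Icc 1 (a - l) ∧ P x} t) :
    IsLeast {x | x ∈ Icc l (a - 1) ∧ P (x + 1 - l)} (t + l - 1) := by
  obtain ⟨⟨htI, hPt⟩, hmin⟩ := ht
  rw [mem_Icc] at htI
  refine ⟨⟨mem_Icc.mpr ⟨by omega, by omega⟩, by rwa [show t + l - 1 + 1 - l = t by omega]⟩, ?_⟩
  rintro x ⟨hx, hPx⟩
  rw [mem_Icc] at hx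
  have := hmin ⟨mem_Icc.mpr ⟨by omega, by omega⟩, hPx⟩
  omega

lemma Fmap_succ_sub {n k l z : ℕ} (hk : 1 ≤ k) (hkn : k ≤ n) (w : ℕ → ℕ) (hl : 1 ≤ l)
    (hlz : l ≤ z) (hz : z + 2 ≤ n) :
    Fmap n k l w (z + 1) - Fmap n k l w z = l * c n k l (z + 1) - Dmap n k l w := by
  obtain ⟨m, rfl⟩ : ∃ m, l = m + 1 := ⟨l - 1, by omega⟩
  have := c_succ_sub hk hkn (by omega : m ≤ z) hz
  simp only [Fmap, Nat.add_sub_cancel]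
  push_cast
  linarith

theorem optimal_point_Fmap_general (n k : ℕ) (hk : 1 ≤ k) (hkn : k < n) (l : ℕ)
    (hl : l ∈ Finset.Icc 1 k) (w : ℕ → ℕ) :
    (∀ s : ℕ, IsLeast {x : ℕ | x ∈ Finset.Icc l (n - 1) ∧
        c n k l (x + 1) ≤ Dmap n k l w / l} s →
      ∀ x ∈ Finset.Icc l (n - 1), Fmap n k l w x ≤ Fmap n k l w s) ∧
    (∀ t : ℕ, IsLeast {x : ℕ | x ∈ Finset.Icc 1 (n - l) ∧
        d n k l x ≤ Dmap n k l w / l} t →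
      ∀ x ∈ Finset.Icc l (n - 1), Fmap n k l w x ≤ Fmap n k l w (t + l - 1)) := by
  obtain ⟨hl1, hlk⟩ := mem_Icc.mp hl
  have hl0 : (0 : ℝ) < l := by exact_mod_cast hl1
  have optimal : ∀ s : ℕ, IsLeast {x : ℕ | x ∈ Icc l (n - 1) ∧
      c n k l (x + 1) ≤ Dmap n k l w / l} s →
      ∀ x ∈ Icc l (n - 1), Fmap n k l w x ≤ Fmap n k l w s := by
    intro s hs x hx
    have hg : AntitoneOn (fun z => l * c n k l (z + 1) - Dmap n k l w) (Set.Ico l (n - 1)) :=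
      fun y ⟨hly, hyn⟩ z ⟨hlz, hzn⟩ hyz => sub_le_sub_right (mul_le_mul_of_nonneg_left
        (c_antitoneOn hk hkn.le hl1 ⟨by omega, by omega⟩ ⟨by omega, by omega⟩ (by omega)) hl0.le) _
    refine isMaxOn_iff.mp (isMaxOn_of_isLeast_increment_nonpos
      (fun z hlz hz => Fmap_succ_sub hk hkn.le w hl1 hlz (by omega)) hg ?_) x (mem_Icc.mp hx)
    simpa [le_div_iff₀' hl0] using hs
  exact ⟨optimal, fun t ht => optimal _ (isLeast_add_sub_one hl1 (by omega) ht)⟩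

theorem optimal_point_Fmap (n k : ℕ) (hk : 1 ≤ k) (hkn : k < n) (l : ℕ)
    (hl : l ∈ Finset.Icc 1 k) (w : ℕ → ℕ) (hw : memX n k l w) :
    (∀ s : ℕ, IsLeast {x : ℕ | x ∈ Finset.Icc l (n - 1) ∧
        c n k l (x + 1) ≤ Dmap n k l w / l} s →
      ∀ x ∈ Finset.Icc l (n - 1), Fmap n k l w x ≤ Fmap n k l w s) ∧
    (∀ t : ℕ, IsLeast {x : ℕ | x ∈ Finset.Icc 1 (n - l) ∧
        d n k l x ≤ Dmap n k l w / l} t →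
      ∀ x ∈ Finset.Icc l (n - 1), Fmap n k l w x ≤ Fmap n k l w (t + l - 1)) :=
  optimal_point_Fmap_general n k hk hkn l hl w
end Secretary
end
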